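/- arXiv:1702.05678 — 3 statements merged into one kernel-verified Lean document; each statement's English description precedes it below -/
import Mathlib

section
/- There is an absolute constant C > 0 such that for every k ≥ 0, every d ≥ 2, every n, and every ε ∈ (0,1], both the property of (2k+1)-cycle-freeness and the property of (2k+2)-cycle-freeness of n-vertex graphs with maximum degree at most d admit a one-sided (k, q)-round-adaptive ε-tester in the bounded-degree graph model with q ≤ C·d^{k+2}/ε. -/
open scoped ENNReal BigOperators

namespace Adaptivity

/-- A deterministic `k`-round-adaptive query algorithm over domain `D` with answer
alphabet `R` and output type `O`: in each of the `k+1` rounds it chooses a query set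
based on the partial view of the oracle obtained so far (which records exactly the
previously queried points and the answers received), and finally produces an output
from the full view obtained. -/
structure DetAlg (D R O : Type) [DecidableEq D] (k : ℕ) where
  query : Fin (k + 1) → (D → Option R) → Finset D
  out : (D → Option R) → O

variable {D R O : Type} [DecidableEq D] {k : ℕ}

/-- The partial view of an oracle `f` on a set `Q` of already-queried points. -/
def view (f : D → R) (Q : Finset D) : D → Option R :=
  fun x => if x ∈ Q then some (f x) else none

/-- The set of points queried during the first `ℓ` rounds, when run on oracle `f`. -/
def DetAlg.seen (T : DetAlg D R O k) (f : D → R) : ℕ → Finset D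
  | 0 => ∅
  | ℓ + 1 =>
      T.seen f ℓ ∪
        (if h : ℓ < k + 1 then T.query ⟨ℓ, h⟩ (view f (T.seen f ℓ)) else ∅)

/-- The query set produced in round `ℓ` on oracle `f`. -/
def DetAlg.queries (T : DetAlg D R O k) (f : D → R) (ℓ : Fin (k + 1)) : Finset D :=
  T.query ℓ (view f (T.seen f ℓ.1))

/-- The total number of queries made on oracle `f`. -/
def DetAlg.totalQueries (T : DetAlg D R O k) (f : D → R) : ℕ :=
  ∑ ℓ : Fin (k + 1), (T.queries f ℓ).card

/-- The output of the algorithm on oracle `f`. -/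
def DetAlg.run (T : DetAlg D R O k) (f : D → R) : O :=
  T.out (view f (T.seen f (k + 1)))

/-- A randomized `k`-round-adaptive algorithm is a probability distribution (`PMF`) over
deterministic ones; `probOut A f p` is the probability that its output on oracle `f`
satisfies the predicate `p`. -/
noncomputable def probOut (A : PMF (DetAlg D R O k)) (f : D → R) (p : O → Prop) : ℝ≥0∞ :=
  A.toOuterMeasure {T | p (T.run f)}

/-- The randomized algorithm `A` makes at most `q` queries in total, on every oracle. -/
def queryBound (A : PMF (DetAlg D R O k)) (q : ℝ) : Prop :=
  ∀ T ∈ A.support, ∀ f : D → R, (T.totalQueries f : ℝ) ≤ q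

/-- Relative Hamming distance between two functions on a finite domain. -/
noncomputable def hamDist [Fintype D] (f g : D → R) : ℝ :=
  ({x : D | f x ≠ g x}.ncard : ℝ) / (Fintype.card D : ℝ)

/-- Relative Hamming distance from a function to a (nonempty) property. -/
noncomputable def distToProp [Fintype D] (f : D → R) (P : Set (D → R)) : ℝ :=
  sInf (hamDist f '' P)

/-- `A` is a `(k,q)`-round-adaptive `ε`-tester for the property `P`. -/
def IsTester [Fintype D] (q ε : ℝ) (P : Set (D → R))
    (A : PMF (DetAlg D R Bool k)) : Prop :=
  queryBound A q ∧
    (∀ f ∈ P, (2 : ℝ≥0∞) / 3 ≤ probOut A f (· = true)) ∧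
    (∀ f : D → R, ε < distToProp f P → (2 : ℝ≥0∞) / 3 ≤ probOut A f (· = false))

/-- `A` is a one-sided tester for `P`: it accepts every member of `P` with probability 1. -/
def OneSidedTester [Fintype D] (P : Set (D → R)) (A : PMF (DetAlg D R Bool k)) : Prop :=
  ∀ f ∈ P, probOut A f (· = true) = 1

end Adaptivity

namespace Adaptivity

/-- `g : [n]×[d] → Option [n]` is an adjacency-list representation of the simple graph
`G` on `Fin n` with maximum degree at most `d`: the entries `g (v, i)` that are `some u`
list (without repetition) exactly the neighbors of `v`, and `none` stands for the
symbol `0` (no neighbor in that slot). -/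
def Represents (n d : ℕ) (G : SimpleGraph (Fin n))
    (g : Fin n × Fin d → Option (Fin n)) : Prop :=
  (∀ v u : Fin n, G.Adj v u ↔ ∃ i : Fin d, g (v, i) = some u) ∧
    (∀ v : Fin n, ∀ i j : Fin d, ∀ u : Fin n,
      g (v, i) = some u → g (v, j) = some u → i = j)

/-- Distance between two bounded-degree graphs: the minimum, over adjacency-list
representations of the two graphs, of the fraction of the `d·n` entries on which the
representations differ. -/
noncomputable def graphDist (n d : ℕ) (G H : SimpleGraph (Fin n)) : ℝ :=
  sInf {r : ℝ | ∃ g g' : Fin n × Fin d → Option (Fin n),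
    Represents n d G g ∧ Represents n d H g' ∧ r = hamDist g g'}

/-- Distance from a bounded-degree graph to a property of graphs. -/
noncomputable def distGraphProp (n d : ℕ) (G : SimpleGraph (Fin n))
    (P : Set (SimpleGraph (Fin n))) : ℝ :=
  sInf {r : ℝ | ∃ H ∈ P, r = graphDist n d G H}

/-- A graph is `t`-cycle-free if it has no cycle of length at most `t`. -/
def CycleFreeUpTo {V : Type} (G : SimpleGraph V) (t : ℕ) : Prop :=
  ∀ (v : V) (w : G.Walk v v), w.IsCycle → t < w.length

/-- The property of `n`-vertex graphs with maximum degree at most `d` that are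
`t`-cycle-free. -/
def cycleFreeProp (n d t : ℕ) : Set (SimpleGraph (Fin n)) :=
  {G | (∀ v : Fin n, (G.neighborSet v).ncard ≤ d) ∧ CycleFreeUpTo G t}

/-- `A` is a `(k,q)`-round-adaptive `ε`-tester for the graph property `P` in the
bounded-degree graph model: with oracle access to any adjacency-list representation, it
accepts every graph in `P` with probability `≥ 2/3` and rejects every bounded-degree
graph at distance `> ε` from `P` with probability `≥ 2/3`. -/
def IsGraphTester (n d : ℕ) {k : ℕ} (q ε : ℝ) (P : Set (SimpleGraph (Fin n)))
    (A : PMF (DetAlg (Fin n × Fin d) (Option (Fin n)) Bool k)) : Prop :=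
  queryBound A q ∧
    (∀ G ∈ P, ∀ g : Fin n × Fin d → Option (Fin n), Represents n d G g →
      (2 : ℝ≥0∞) / 3 ≤ probOut A g (· = true)) ∧
    (∀ G : SimpleGraph (Fin n), (∀ v : Fin n, (G.neighborSet v).ncard ≤ d) →
      ε < distGraphProp n d G P →
      ∀ g : Fin n × Fin d → Option (Fin n), Represents n d G g →
        (2 : ℝ≥0∞) / 3 ≤ probOut A g (· = false))

/-- One-sided graph tester: accepts every representation of every graph in `P` with
probability 1. -/
def OneSidedGraphTester (n d : ℕ) {k : ℕ} (P : Set (SimpleGraph (Fin n)))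
    (A : PMF (DetAlg (Fin n × Fin d) (Option (Fin n)) Bool k)) : Prop :=
  ∀ G ∈ P, ∀ g : Fin n × Fin d → Option (Fin n), Represents n d G g →
    probOut A g (· = true) = 1

end Adaptivity

/-!
The tester samples `s = ⌈4/ε⌉` uniform start vertices and runs `k + 1` rounds of breadth-first
search from them, reading in round `ℓ` the adjacency lists of the vertices at distance `ℓ` from
the sample; this costs at most `s·d^(k+1)·d` queries. It rejects iff the revealed subgraph has a
cycle of length `≤ t`. The revealed graph is a subgraph of `G`, so graphs in the property are
always accepted. Conversely, every edge of a cycle of length `≤ 2k + 2` through a sampled vertex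
has an endpoint at distance `≤ k` from it, so the whole cycle is revealed. If `G` is `ε`-far,
deleting all edges at the set `B` of vertices on cycles of length `≤ t` gives a `t`-cycle-free
graph at distance `≤ 2|B|/n`, hence `|B| > εn/2`, and the sample misses `B` with probability
`≤ (1 - ε/2)^s ≤ e^(-2) < 1/3`.
-/

open Finset SimpleGraph

namespace Adaptivity

section DetAlg

variable {D R O : Type} [DecidableEq D] {k : ℕ}

theorem DetAlg.card_seen_eq_sum (T : DetAlg D R O k) (f : D → R)
    (hdisj : ∀ ℓ : Fin (k + 1), Disjoint (T.seen f ℓ) (T.queries f ℓ)) :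
    ∀ m ≤ k + 1, #(T.seen f m) =
      ∑ ℓ ∈ range m, if h : ℓ < k + 1 then #(T.queries f ⟨ℓ, h⟩) else 0
  | 0, _ => by simp [DetAlg.seen]
  | m + 1, hm => by
    have hm' : m < k + 1 := by omega
    rw [DetAlg.seen, dif_pos hm']
    change #(T.seen f m ∪ T.queries f ⟨m, hm'⟩) = _
    rw [card_union_of_disjoint (hdisj ⟨m, hm'⟩),
      card_seen_eq_sum T f hdisj m hm'.le, sum_range_succ, dif_pos hm']

theorem DetAlg.totalQueries_eq_card_seen (T : DetAlg D R O k) (f : D → R)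
    (hdisj : ∀ ℓ : Fin (k + 1), Disjoint (T.seen f ℓ) (T.queries f ℓ)) :
    T.totalQueries f = #(T.seen f (k + 1)) := by
  rw [T.card_seen_eq_sum f hdisj (k + 1) le_rfl, ← Fin.sum_univ_eq_sum_range]
  simp [DetAlg.totalQueries, Fin.is_le]

theorem probOut_eq_one_iff (A : PMF (DetAlg D R O k)) (f : D → R) (p : O → Prop) :
    probOut A f p = 1 ↔ ∀ T ∈ A.support, p (T.run f) :=
  PMF.toOuterMeasure_apply_eq_one_iff _ _

end DetAlg

section Representation

variable {n d : ℕ} {G : SimpleGraph (Fin n)} {g : Fin n × Fin d → Option (Fin n)}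

def slotTargets (g : Fin n × Fin d → Option (Fin n)) (W : Finset (Fin n)) : Finset (Fin n) :=
  ((W ×ˢ univ).image g).eraseNone

theorem mem_slotTargets {W : Finset (Fin n)} {u : Fin n} :
    u ∈ slotTargets g W ↔ ∃ v ∈ W, ∃ i, g (v, i) = some u := by
  simp [slotTargets]

theorem card_slotTargets_le (g : Fin n × Fin d → Option (Fin n)) (W : Finset (Fin n)) :
    #(slotTargets g W) ≤ #W * d :=
  (card_eraseNone_le _).trans (card_image_le.trans (by simp))

theorem slotTargets_mono : Monotone (slotTargets g) := fun _ _ hW _ hu => by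
  obtain ⟨v, hv, i, hi⟩ := mem_slotTargets.1 hu
  exact mem_slotTargets.2 ⟨v, hW hv, i, hi⟩

theorem Represents.neighborSet_subset (hg : Represents n d G g) (v : Fin n) :
    G.neighborSet v ⊆ slotTargets g {v} := fun u hu => by
  obtain ⟨i, hi⟩ := (hg.1 v u).1 hu
  exact mem_slotTargets.2 ⟨v, mem_singleton_self v, i, hi⟩

theorem Represents.ncard_neighborSet_le (hg : Represents n d G g) (v : Fin n) :
    (G.neighborSet v).ncard ≤ d := by
  calc (G.neighborSet v).ncard ≤ #(slotTargets g {v}) := by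
        rw [← Set.ncard_coe_finset]; exact Set.ncard_le_ncard (hg.neighborSet_subset v)
    _ ≤ d := by simpa using card_slotTargets_le g {v}

theorem Represents.card_slots_eq_some_le (hg : Represents n d G g) (u : Fin n) :
    #{x | g x = some u} ≤ d := by
  refine (card_le_card_of_injOn Prod.fst (fun x hx => ?_) fun x hx y hy hxy => ?_).trans
    (by simpa using card_slotTargets_le g {u})
  · exact hg.neighborSet_subset u ((hg.1 _ _).2 ⟨x.2, (mem_filter.1 hx).2⟩).symm
  · simp only [coe_filter, mem_univ, true_and, Set.mem_ofPred_eq] at hx hy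
    exact Prod.ext hxy (hg.2 x.1 x.2 y.2 u hx (hxy ▸ hy))

theorem distGraphProp_le_hamDist {P : Set (SimpleGraph (Fin n))} {H : SimpleGraph (Fin n)}
    (hH : H ∈ P) (hg : Represents n d G g) {g' : Fin n × Fin d → Option (Fin n)}
    (hg' : Represents n d H g') : distGraphProp n d G P ≤ hamDist g g' := by
  have hamDist_nonneg (g₁ g₂ : Fin n × Fin d → Option (Fin n)) : 0 ≤ hamDist g₁ g₂ :=
    div_nonneg (Nat.cast_nonneg _) (Nat.cast_nonneg _)
  have graphDist_nonneg (H' : SimpleGraph (Fin n)) : 0 ≤ graphDist n d G H' :=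
    Real.sInf_nonneg (by rintro _ ⟨g₁, g₂, -, -, rfl⟩; exact hamDist_nonneg g₁ g₂)
  calc distGraphProp n d G P ≤ graphDist n d G H :=
        csInf_le ⟨0, by rintro _ ⟨H', -, rfl⟩; exact graphDist_nonneg H'⟩ ⟨H, hH, rfl⟩
    _ ≤ hamDist g g' :=
        csInf_le ⟨0, by rintro _ ⟨g₁, g₂, -, -, rfl⟩; exact hamDist_nonneg g₁ g₂⟩
          ⟨g, g', hg, hg', rfl⟩

end Representation

section ShortCycles

variable {V : Type} {G H : SimpleGraph V} {t : ℕ}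

theorem CycleFreeUpTo.mono (hle : H ≤ G) (hG : CycleFreeUpTo G t) : CycleFreeUpTo H t :=
  fun v w hw => by simpa using hG v (w.mapLe hle) (hw.mapLe hle)

open Classical in
noncomputable def shortCycleVertices [Fintype V] (G : SimpleGraph V) (t : ℕ) : Finset V :=
  {v | ∃ w : G.Walk v v, w.IsCycle ∧ w.length ≤ t}

def isolate (G : SimpleGraph V) (B : Set V) : SimpleGraph V :=
  ((⊤ : G.Subgraph).induce Bᶜ).spanningCoe

@[simp]
theorem isolate_adj {B : Set V} {a b : V} :
    (isolate G B).Adj a b ↔ G.Adj a b ∧ a ∉ B ∧ b ∉ B := by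
  simp [isolate]
  tauto

theorem isolate_le (B : Set V) : isolate G B ≤ G := fun _ _ h => (isolate_adj.1 h).1

theorem cycleFreeUpTo_isolate_shortCycleVertices [Fintype V] :
    CycleFreeUpTo (isolate G (shortCycleVertices G t)) t := by
  intro v w hw
  by_contra! hlen
  have hv : v ∈ shortCycleVertices G t := by
    simpa [shortCycleVertices] using ⟨w.mapLe (isolate_le _), hw.mapLe (isolate_le _), by simpa⟩
  cases w with
  | nil => exact hw.not_nil Walk.Nil.nil
  | cons h _ => exact (isolate_adj.1 h).2.1 hv

end ShortCycles

section Pruning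

variable {n d : ℕ} {G : SimpleGraph (Fin n)} {g : Fin n × Fin d → Option (Fin n)}
  {B : Finset (Fin n)}

def blankSlots (g : Fin n × Fin d → Option (Fin n)) (B : Finset (Fin n)) :
    Fin n × Fin d → Option (Fin n) :=
  fun x => if x.1 ∈ B ∨ ∃ u ∈ B, g x = some u then none else g x

theorem blankSlots_eq_some {x : Fin n × Fin d} {u : Fin n} :
    blankSlots g B x = some u ↔ g x = some u ∧ x.1 ∉ B ∧ u ∉ B := by
  unfold blankSlots
  split_ifs with h <;> aesop

theorem Represents.isolate_blankSlots (hg : Represents n d G g) :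
    Represents n d (isolate G B) (blankSlots g B) := by
  refine ⟨fun v u => ?_, fun v i j u hi hj =>
    hg.2 v i j u (blankSlots_eq_some.1 hi).1 (blankSlots_eq_some.1 hj).1⟩
  simp only [isolate_adj, mem_coe, hg.1, blankSlots_eq_some]
  aesop

theorem Represents.card_ne_blankSlots_le (hg : Represents n d G g) :
    #{x | g x ≠ blankSlots g B x} ≤ 2 * #B * d := by
  have hsub : ({x | g x ≠ blankSlots g B x} : Finset _) ⊆
      B ×ˢ univ ∪ B.biUnion fun u => {x | g x = some u} := by
    intro x hx
    replace hx := (mem_filter.1 hx).2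
    simp only [blankSlots] at hx
    split_ifs at hx with h
    · aesop
    · exact absurd rfl hx
  calc _ ≤ #(B ×ˢ univ) + #(B.biUnion fun u => {x | g x = some u}) :=
        (card_le_card hsub).trans (card_union_le _ _)
    _ ≤ #B * d + #B * d := by
        gcongr
        · simp
        · exact card_biUnion_le_card_mul _ _ _ fun u _ => hg.card_slots_eq_some_le u
    _ = 2 * #B * d := by ring

theorem Represents.hamDist_blankSlots_le (hd : 0 < d) (hg : Represents n d G g) :
    hamDist g (blankSlots g B) ≤ 2 * #B / n := by
  rcases n.eq_zero_or_pos with rfl | hn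
  · simp [hamDist]
  have hcard : ({x | g x ≠ blankSlots g B x} : Set _).ncard ≤ 2 * #B * d := by
    rw [← coe_filter_univ, Set.ncard_coe_finset]
    exact hg.card_ne_blankSlots_le
  rw [hamDist, Fintype.card_prod, Fintype.card_fin, Fintype.card_fin,
    div_le_div_iff₀ (by positivity) (by positivity)]
  calc _ ≤ (2 * #B * d : ℝ) * n := by gcongr; exact_mod_cast hcard
    _ = _ := by push_cast; ring

theorem Represents.distGraphProp_cycleFreeProp_le (hd : 0 < d) (hg : Represents n d G g) (t : ℕ) :
    distGraphProp n d G (cycleFreeProp n d t) ≤ 2 * #(shortCycleVertices G t) / n := by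
  have hpruned := hg.isolate_blankSlots (B := shortCycleVertices G t)
  have hmem : isolate G (shortCycleVertices G t) ∈ cycleFreeProp n d t :=
    ⟨hpruned.ncard_neighborSet_le, cycleFreeUpTo_isolate_shortCycleVertices⟩
  exact (distGraphProp_le_hamDist hmem hg hpruned).trans (hg.hamDist_blankSlots_le hd)

end Pruning

section BreadthFirstSearch

variable {n d : ℕ} {G : SimpleGraph (Fin n)} {g : Fin n × Fin d → Option (Fin n)}
  {S : Finset (Fin n)} {t k : ℕ}

-- In a view, `none` marks an unqueried slot and `some none` a queried empty one.
def namedVertices (φ : Fin n × Fin d → Option (Option (Fin n))) : Finset (Fin n) :=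
  (univ.image φ).eraseNone.eraseNone

def revealedGraph (φ : Fin n × Fin d → Option (Option (Fin n))) : SimpleGraph (Fin n) :=
  fromRel fun a b => ∃ i, φ (a, i) = some (some b)

open Classical in
noncomputable def bfsTester (t : ℕ) (S : Finset (Fin n)) (k : ℕ) :
    DetAlg (Fin n × Fin d) (Option (Fin n)) Bool k where
  query _ φ := {x ∈ (S ∪ namedVertices φ) ×ˢ univ | φ x = none}
  out φ := decide (CycleFreeUpTo (revealedGraph φ) t)

-- `explored g S (ℓ + 1)` is the set of vertices within distance `ℓ` of `S`.
def explored (g : Fin n × Fin d → Option (Fin n)) (S : Finset (Fin n)) : ℕ → Finset (Fin n)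
  | 0 => ∅
  | ℓ + 1 => S ∪ slotTargets g (explored g S ℓ)

theorem namedVertices_view (W : Finset (Fin n)) :
    namedVertices (view g (W ×ˢ univ)) = slotTargets g W := by
  ext u
  simp [namedVertices, mem_slotTargets, view]

theorem explored_mono : Monotone (explored g S) := by
  refine monotone_nat_of_le_succ fun ℓ => ?_
  induction ℓ with
  | zero => simp [explored]
  | succ ℓ ih => exact union_subset_union_right (slotTargets_mono ih)

theorem bfsTester_seen {ℓ : ℕ} (hℓ : ℓ ≤ k + 1) :
    (bfsTester t S k).seen g ℓ = explored g S ℓ ×ˢ univ := by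
  induction ℓ with
  | zero => simp [DetAlg.seen, explored]
  | succ ℓ ih =>
    rw [DetAlg.seen, dif_pos (by omega), ih (by omega)]
    simp only [bfsTester, namedVertices_view]
    ext ⟨v, i⟩
    have hmono : v ∈ explored g S ℓ → v ∈ S ∪ slotTargets g (explored g S ℓ) :=
      fun h => explored_mono ℓ.le_succ h
    simp only [view, explored, mem_union, mem_product, mem_filter, mem_univ, and_true,
      ite_eq_right_iff, reduceCtorEq, imp_false] at hmono ⊢
    tauto

theorem card_explored_le (hd : 2 ≤ d) (ℓ : ℕ) : #(explored g S ℓ) ≤ #S * d ^ ℓ := by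
  obtain ⟨c, rfl⟩ : ∃ c, d = c + 1 := ⟨d - 1, by omega⟩
  -- the geometric-series bound `#S * (1 + d + ⋯ + d ^ (ℓ - 1))`, multiplied by `d - 1`
  suffices h : ∀ ℓ, #(explored g S ℓ) * c + #S ≤ #S * (c + 1) ^ ℓ from
    le_trans (Nat.le_mul_of_pos_right _ (by omega)) (Nat.le_of_add_right_le (h ℓ))
  intro ℓ
  induction ℓ with
  | zero => simp [explored]
  | succ ℓ ih =>
    have hstep : #(explored g S (ℓ + 1)) ≤ #S + #(explored g S ℓ) * (c + 1) :=
      (card_union_le _ _).trans (Nat.add_le_add_left (card_slotTargets_le _ _) _)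
    calc _ ≤ (#S + #(explored g S ℓ) * (c + 1)) * c + #S := by gcongr
      _ = (c + 1) * (#(explored g S ℓ) * c + #S) := by ring
      _ ≤ (c + 1) * (#S * (c + 1) ^ ℓ) := by gcongr
      _ = _ := by ring

theorem bfsTester_totalQueries_le (hd : 2 ≤ d) :
    (bfsTester t S k).totalQueries g ≤ #S * d ^ (k + 2) := by
  have hdisj (ℓ : Fin (k + 1)) :
      Disjoint ((bfsTester t S k).seen g ℓ) ((bfsTester t S k).queries g ℓ) := by
    refine disjoint_right.2 fun x hx hseen => ?_
    simpa [view, hseen] using (mem_filter.1 hx).2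
  rw [DetAlg.totalQueries_eq_card_seen _ _ hdisj, bfsTester_seen le_rfl, card_product, card_univ,
    Fintype.card_fin, pow_succ, ← mul_assoc]
  exact Nat.mul_le_mul_right d (card_explored_le hd _)

open Classical in
theorem bfsTester_run :
    (bfsTester t S k).run g =
      decide (CycleFreeUpTo (revealedGraph (view g (explored g S (k + 1) ×ˢ univ))) t) := by
  rw [DetAlg.run, bfsTester_seen le_rfl]
  rfl

theorem Represents.revealedGraph_view_le (hg : Represents n d G g)
    (Q : Finset (Fin n × Fin d)) : revealedGraph (view g Q) ≤ G := by
  have hedge {a b : Fin n} {i : Fin d} (h : view g Q (a, i) = some (some b)) : G.Adj a b := by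
    simp only [view, Option.ite_none_right_eq_some, Option.some.injEq] at h
    exact (hg.1 a b).2 ⟨i, h.2⟩
  rintro a b ⟨-, ⟨i, hi⟩ | ⟨i, hi⟩⟩
  · exact hedge hi
  · exact (hedge hi).symm

theorem Represents.revealedGraph_adj_of_mem (hg : Represents n d G g) {W : Finset (Fin n)}
    {a b : Fin n} (ha : a ∈ W) (h : G.Adj a b) :
    (revealedGraph (view g (W ×ˢ univ))).Adj a b := by
  obtain ⟨i, hi⟩ := (hg.1 a b).1 h
  exact ⟨h.ne, Or.inl ⟨i, by simp [view, ha, hi]⟩⟩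

theorem Represents.mem_explored_succ (hg : Represents n d G g) {m : ℕ} {a b : Fin n}
    (ha : a ∈ explored g S m) (h : G.Adj a b) : b ∈ explored g S (m + 1) :=
  mem_union_right _ (mem_slotTargets.2 ⟨a, ha, (hg.1 a b).1 h⟩)

theorem Represents.edges_subset_revealedGraph (hg : Represents n d G g) {N m : ℕ} {a b : Fin n}
    (w : G.Walk a b) (ha : a ∈ explored g S m) (hlen : m + w.length ≤ N + 1) :
    ∀ e ∈ w.edges, e ∈ (revealedGraph (view g (explored g S N ×ˢ univ))).edgeSet := by
  induction w generalizing m with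
  | nil => simp
  | cons h p ih =>
    rw [Walk.length_cons] at hlen
    intro e he
    rw [Walk.edges_cons, List.mem_cons] at he
    rcases he with rfl | he
    · exact hg.revealedGraph_adj_of_mem (explored_mono (by omega) ha) h
    · exact ih (hg.mem_explored_succ ha h) (by omega) e he

theorem Represents.edges_closedWalk_subset_revealedGraph (hg : Represents n d G g) {v : Fin n}
    (hv : v ∈ S) (c : G.Walk v v) (hc : c.length ≤ 2 * k + 2) :
    ∀ e ∈ c.edges, e ∈ (revealedGraph (view g (explored g S (k + 1) ×ˢ univ))).edgeSet := by
  have hv₁ : v ∈ explored g S 1 := mem_union_left _ hv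
  have hsplit : c.edges = (c.take (k + 1)).edges ++ (c.drop (k + 1)).edges := by
    rw [Walk.edges_take, Walk.edges_drop, List.take_append_drop]
  intro e he
  rcases List.mem_append.1 (hsplit ▸ he) with he | he
  · exact hg.edges_subset_revealedGraph _ hv₁
      (by rw [Walk.take_length]; omega) e he
  · refine hg.edges_subset_revealedGraph (c.drop (k + 1)).reverse hv₁
      (by rw [Walk.length_reverse, Walk.drop_length]; omega) e ?_
    rwa [Walk.edges_reverse, List.mem_reverse]

open Classical in
theorem Represents.bfsTester_run_eq_true (hg : Represents n d G g) (hG : CycleFreeUpTo G t) :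
    (bfsTester t S k).run g = true := by
  rw [bfsTester_run, decide_eq_true_iff]
  exact hG.mono (hg.revealedGraph_view_le _)

open Classical in
theorem Represents.bfsTester_run_eq_false (hg : Represents n d G g) (ht : t ≤ 2 * k + 2)
    {v : Fin n} (hvS : v ∈ S) (hv : v ∈ shortCycleVertices G t) :
    (bfsTester t S k).run g = false := by
  obtain ⟨c, hc, hlen⟩ : ∃ c : G.Walk v v, c.IsCycle ∧ c.length ≤ t := by
    simpa [shortCycleVertices] using hv
  have hrev := hg.edges_closedWalk_subset_revealedGraph (k := k) hvS c (by omega)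
  rw [bfsTester_run, decide_eq_false_iff_not]
  intro hfree
  have := hfree v (c.transfer _ hrev) (hc.transfer hrev)
  rw [Walk.length_transfer] at this
  omega

end BreadthFirstSearch

section Sampling

theorem three_mul_pow_sub_le {N b s : ℕ} {ε : ℝ} (hb : b ≤ N) (hεb : ε * N ≤ 2 * b)
    (hs : 4 ≤ s * ε) : 3 * (N - b) ^ s ≤ N ^ s := by
  have hN : (0 : ℝ) ≤ N := N.cast_nonneg
  have hmiss : ((N - b : ℕ) : ℝ) ≤ N * Real.exp (-(ε / 2)) := by
    rw [Nat.cast_sub hb]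
    nlinarith [mul_le_mul_of_nonneg_left (Real.one_sub_le_exp_neg (ε / 2)) hN]
  have hexp : Real.exp (-(ε / 2)) ^ s ≤ 1 / 3 := by
    rw [← Real.exp_nat_mul]
    calc Real.exp (s * -(ε / 2)) ≤ Real.exp (-2) := Real.exp_le_exp.2 (by linarith)
      _ = (Real.exp 2)⁻¹ := Real.exp_neg 2
      _ ≤ 1 / 3 := by
        rw [one_div]
        exact inv_anti₀ (by norm_num) (by linarith [Real.add_one_le_exp 2])
  have : (3 * ((N - b : ℕ) : ℝ) ^ s : ℝ) ≤ N ^ s := by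
    calc (3 * ((N - b : ℕ) : ℝ) ^ s : ℝ) ≤ 3 * (N * Real.exp (-(ε / 2))) ^ s := by
          gcongr
      _ = 3 * Real.exp (-(ε / 2)) ^ s * N ^ s := by ring
      _ ≤ 3 * (1 / 3) * N ^ s := by gcongr
      _ = N ^ s := by ring
  exact_mod_cast this

open scoped ENNReal in
theorem two_thirds_le_uniformOfFintype_exists_mem {α : Type} [Fintype α] [Nonempty α]
    [DecidableEq α] (B : Finset α) {s : ℕ}
    (h : 3 * (Fintype.card α - #B) ^ s ≤ Fintype.card α ^ s) :
    (2 : ℝ≥0∞) / 3 ≤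
      (PMF.uniformOfFintype (Fin s → α)).toOuterMeasure {σ | ∃ i, σ i ∈ B} := by
  have hset : {σ : Fin s → α | ∃ i, σ i ∈ B} =
      ((Fintype.piFinset fun _ : Fin s => Bᶜ)ᶜ : Finset (Fin s → α)) := by
    ext σ; simp
  rw [hset, PMF.toOuterMeasure_uniformOfFintype_apply]
  rw [Fintype.card_eq_nat_card, Nat.card_coe_set_eq, Set.ncard_coe_finset, card_compl,
    Fintype.card_piFinset]
  simp only [prod_const, card_compl, card_univ, Fintype.card_fin, Fintype.card_fun]
  set M := Fintype.card α ^ s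
  set m := (Fintype.card α - #B) ^ s
  have hM : (M : ℝ≥0∞) ≠ 0 := by simp [M]
  calc (2 : ℝ≥0∞) / 3 = (2 * M : ℝ≥0∞) / (3 * M) :=
        (ENNReal.mul_div_mul_right _ _ hM (ENNReal.natCast_ne_top M)).symm
    _ ≤ (3 * (M - m : ℕ) : ℝ≥0∞) / (3 * M) :=
        ENNReal.div_le_div_right (by exact_mod_cast (by omega : 2 * M ≤ 3 * (M - m))) _
    _ = (M - m : ℕ) / M := ENNReal.mul_div_mul_left _ _ (by norm_num) (by norm_num)

end Sampling

section Tester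

open scoped ENNReal

variable {n d k t s : ℕ} {ε : ℝ} {G : SimpleGraph (Fin n)}
  {g : Fin n × Fin d → Option (Fin n)}

theorem isGraphTester_of_oneSided {P : Set (SimpleGraph (Fin n))} {q : ℝ}
    {A : PMF (DetAlg (Fin n × Fin d) (Option (Fin n)) Bool k)} (hq : queryBound A q)
    (hone : OneSidedGraphTester n d P A)
    (hfar : ∀ G : SimpleGraph (Fin n), ε < distGraphProp n d G P →
      ∀ g, Represents n d G g → (2 : ℝ≥0∞) / 3 ≤ probOut A g (· = false)) :
    IsGraphTester n d q ε P A :=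
  ⟨hq, fun G hG g hg => (hone G hG g hg).symm ▸ ENNReal.div_le_of_le_mul (by norm_num),
    fun G _ hG g hg => hfar G hG g hg⟩

theorem queryBound_of_support_bfsTester (hd : 2 ≤ d)
    {A : PMF (DetAlg (Fin n × Fin d) (Option (Fin n)) Bool k)}
    (hA : ∀ T ∈ A.support, ∃ S : Finset (Fin n), #S ≤ s ∧ bfsTester t S k = T) :
    queryBound A (s * d ^ (k + 2) : ℕ) := by
  intro T hT g
  obtain ⟨S, hS, rfl⟩ := hA T hT
  exact_mod_cast (bfsTester_totalQueries_le hd).trans (Nat.mul_le_mul_right _ hS)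

theorem oneSidedGraphTester_of_support_bfsTester
    {A : PMF (DetAlg (Fin n × Fin d) (Option (Fin n)) Bool k)}
    (hA : ∀ T ∈ A.support, ∃ S : Finset (Fin n), bfsTester t S k = T) :
    OneSidedGraphTester n d (cycleFreeProp n d t) A := by
  intro G hG g hg
  rw [probOut_eq_one_iff]
  intro T hT
  obtain ⟨S, rfl⟩ := hA T hT
  exact hg.bfsTester_run_eq_true hG.2

theorem Represents.mul_lt_two_mul_card_shortCycleVertices (hd : 0 < d) (hg : Represents n d G g)
    (hε : 0 < ε) (hG : ε < distGraphProp n d G (cycleFreeProp n d t)) :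
    ε * n < 2 * #(shortCycleVertices G t) := by
  have := hG.trans_le (hg.distGraphProp_cycleFreeProp_le hd t)
  rcases n.eq_zero_or_pos with rfl | hn
  · simp only [CharP.cast_eq_zero, div_zero] at this
    linarith
  · rw [lt_div_iff₀ (by positivity)] at this
    linarith

theorem Represents.two_thirds_le_probOut_sample_bfsTester [Nonempty (Fin n)] (hd : 0 < d)
    (hg : Represents n d G g) (ht : t ≤ 2 * k + 2) (hε : 0 < ε) (hs : 4 ≤ s * ε)
    (hG : ε < distGraphProp n d G (cycleFreeProp n d t)) :
    (2 : ℝ≥0∞) / 3 ≤ probOut ((PMF.uniformOfFintype (Fin s → Fin n)).map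
      fun σ => bfsTester t (univ.image σ) k) g (· = false) := by
  have hmiss : 3 * (n - #(shortCycleVertices G t)) ^ s ≤ n ^ s :=
    three_mul_pow_sub_le ((card_le_univ _).trans_eq (Fintype.card_fin n))
      (hg.mul_lt_two_mul_card_shortCycleVertices hd hε hG).le hs
  have hhit := two_thirds_le_uniformOfFintype_exists_mem (shortCycleVertices G t)
    (by simpa using hmiss)
  rw [probOut, PMF.toOuterMeasure_map_apply]
  refine hhit.trans (PMF.toOuterMeasure_mono _ ?_)
  rintro σ ⟨⟨i, hi⟩, -⟩
  exact hg.bfsTester_run_eq_false ht (mem_image_of_mem σ (mem_univ i)) hi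

theorem four_le_ceil_four_div_mul (hε : 0 < ε) : 4 ≤ ⌈4 / ε⌉₊ * ε :=
  (div_le_iff₀ hε).1 (Nat.le_ceil _)

theorem ceil_four_div_le (hε : 0 < ε) (hε1 : ε ≤ 1) : (⌈4 / ε⌉₊ : ℝ) ≤ 5 / ε := by
  have hceil := mul_lt_mul_of_pos_right (Nat.ceil_lt_add_one (by positivity : 0 ≤ 4 / ε)) hε
  rw [add_mul, div_mul_cancel₀ _ hε.ne'] at hceil
  rw [le_div_iff₀ hε]
  linarith

theorem exists_oneSided_tester_cycleFreeProp (hd : 2 ≤ d) (hε : 0 < ε) (hε1 : ε ≤ 1)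
    (ht : t ≤ 2 * k + 2) :
    ∃ q : ℕ, (q : ℝ) ≤ 5 * (d : ℝ) ^ (k + 2) / ε ∧
      ∃ A : PMF (DetAlg (Fin n × Fin d) (Option (Fin n)) Bool k),
        IsGraphTester n d (q : ℝ) ε (cycleFreeProp n d t) A ∧
          OneSidedGraphTester n d (cycleFreeProp n d t) A := by
  set s := ⌈4 / ε⌉₊
  refine ⟨s * d ^ (k + 2), ?_, ?_⟩
  · push_cast
    calc (s : ℝ) * d ^ (k + 2) ≤ 5 / ε * d ^ (k + 2) := by
          gcongr; exact ceil_four_div_le hε hε1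
      _ = _ := by ring
  suffices key : ∃ A : PMF (DetAlg (Fin n × Fin d) (Option (Fin n)) Bool k),
      (∀ T ∈ A.support, ∃ S : Finset (Fin n), #S ≤ s ∧ bfsTester t S k = T) ∧
      ∀ G : SimpleGraph (Fin n), ε < distGraphProp n d G (cycleFreeProp n d t) →
        ∀ g, Represents n d G g → (2 : ℝ≥0∞) / 3 ≤ probOut A g (· = false) by
    obtain ⟨A, hA, hrej⟩ := key
    have hone := oneSidedGraphTester_of_support_bfsTester fun T hT =>
      (hA T hT).imp fun _ => And.right
    exact ⟨A, isGraphTester_of_oneSided (queryBound_of_support_bfsTester hd hA) hone hrej, hone⟩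
  rcases n.eq_zero_or_pos with rfl | hn
  · refine ⟨PMF.pure (bfsTester t ∅ k),
      fun T hT => ⟨∅, by simp, ((PMF.mem_support_pure_iff _ _).1 hT).symm⟩,
      fun G hG g hg => absurd (hg.mul_lt_two_mul_card_shortCycleVertices (by omega) hε hG) ?_⟩
    simp [eq_empty_of_isEmpty]
  have : Nonempty (Fin n) := ⟨⟨0, hn⟩⟩
  refine ⟨_, fun T hT => ?_, fun G hG g hg =>
    hg.two_thirds_le_probOut_sample_bfsTester (by omega) ht hε
      (four_le_ceil_four_div_mul hε) hG⟩
  obtain ⟨σ, -, rfl⟩ := (PMF.support_map _ _ ▸ hT :)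
  exact ⟨univ.image σ, card_image_le.trans_eq (card_univ.trans (Fintype.card_fin _)), rfl⟩

end Tester


end Adaptivity

open Adaptivity in
/-- There is an absolute constant `C > 0` such that for every `k ≥ 0`,
`d ≥ 2`, `n` and `ε ∈ (0,1]`, both `(2k+1)`-cycle-freeness and `(2k+2)`-cycle-freeness
of `n`-vertex graphs of maximum degree at most `d` admit a one-sided
`(k, q)`-round-adaptive `ε`-tester with `q ≤ C·d^{k+2}/ε` in the bounded-degree graph
model. -/
theorem cycleFreeness_upper_bound :
    ∃ C : ℝ, 0 < C ∧
      ∀ k d n : ℕ, 2 ≤ d → ∀ ε : ℝ, 0 < ε → ε ≤ 1 →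
        (∃ q : ℕ, (q : ℝ) ≤ C * (d : ℝ) ^ (k + 2) / ε ∧
          ∃ A : PMF (DetAlg (Fin n × Fin d) (Option (Fin n)) Bool k),
            IsGraphTester n d (q : ℝ) ε (cycleFreeProp n d (2 * k + 1)) A ∧
              OneSidedGraphTester n d (cycleFreeProp n d (2 * k + 1)) A) ∧
        (∃ q : ℕ, (q : ℝ) ≤ C * (d : ℝ) ^ (k + 2) / ε ∧
          ∃ A : PMF (DetAlg (Fin n × Fin d) (Option (Fin n)) Bool k),
            IsGraphTester n d (q : ℝ) ε (cycleFreeProp n d (2 * k + 2)) A ∧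
              OneSidedGraphTester n d (cycleFreeProp n d (2 * k + 2)) A) := by
  refine ⟨5, by norm_num, fun k d n hd ε hε hε1 => ⟨?_, ?_⟩⟩ <;>
    exact exists_oneSided_tester_cycleFreeProp hd hε hε1 (by omega)
end

section
/- There exists an absolute constant c > 0 such that for every prime n ≥ 3 and every integer k with 0 ≤ k ≤ c·(n/log n)^{1/3}, every randomized (k,q)-round-adaptive linear decision tree algorithm that computes the (k+1)-iterated address function f_{k+1} satisfies q ≥ c·n/((k+1)²·log n). -/
open scoped ENNReal BigOperators

namespace Adaptivity

/-- The iterated pointer values `g_j(x)` of the paper: `g_0(x) = x_1` and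
`g_{j+1}(x) = x_{g_j(x)+1}` (1-based indexing, i.e. `g_{j+1}(x)` is the coordinate of
`x` at the 0-based index `⌜g_j(x)⌝`).  (The `dite` branches are junk values which never
occur when `n > 0`.) -/
def gIter (n : ℕ) (x : Fin n → ZMod n) : ℕ → ZMod n
  | 0 => if h : 0 < n then x ⟨0, h⟩ else 0
  | j + 1 =>
      if h : (gIter n x j).val < n then x ⟨(gIter n x j).val, h⟩ else 0

/-- The `k`-iterated address function `f_k : 𝔽_n^n → {0,1}`: `f_k(x) = 1` iff
`g_k(x)` is even (i.e. its representative in `{0,…,n−1}` is even). -/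
def fAddr (n : ℕ) (x : Fin n → ZMod n) (k : ℕ) : Bool :=
  (gIter n x k).val % 2 == 0

end Adaptivity

namespace Adaptivity

/-- The linear-query oracle of a hidden input `x ∈ 𝔽_n^n`: on query a vector
`L ∈ 𝔽_n^n`, it answers the inner product `⟨L, x⟩`. -/
def linOracle (n : ℕ) (x : Fin n → ZMod n) : (Fin n → ZMod n) → ZMod n :=
  fun L => ∑ i : Fin n, L i * x i

/-- `A` is a randomized `(k,q)`-round-adaptive linear decision tree algorithm computing
`f : 𝔽_n^n → {0,1}`: on every hidden input `x` it makes at most `q` linear queries and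
outputs `f x` with probability at least `2/3`. -/
def ComputesLDT (n : ℕ) {k : ℕ} (q : ℝ)
    (A : PMF (DetAlg (Fin n → ZMod n) (ZMod n) Bool k))
    (f : (Fin n → ZMod n) → Bool) : Prop :=
  (∀ T ∈ A.support, ∀ x : Fin n → ZMod n,
      (T.totalQueries (linOracle n x) : ℝ) ≤ q) ∧
    (∀ x : Fin n → ZMod n, (2 : ℝ≥0∞) / 3 ≤ probOut A (linOracle n x) (· = f x))

end Adaptivity

/-!
By Yao's principle it suffices to consider a deterministic algorithm that is correct on two
thirds of the inputs. After round `m`, reveal to it for free the coordinates read by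
`g_0, …, g_{m-1}`. Everything it then knows is a set of linear functionals of `x`, and the inputs
with the same transcript form an affine slice. While the coordinate read by `g_m` is not in the
span of the known functionals, `g_m(x)` is uniform on the slice, so the next pointer lands on
one of the at most `q + k + 1` known unit vectors with probability at most `(q + k + 1)/n`.
Summing over the rounds, the last pointer is known on at most a `(k+1)(q+k+1)/n` fraction of
the inputs. Elsewhere the output is constant on each slice while the parity of `g_{k+1}` is
balanced up to `1/n`. Hence `2/3 ≤ (k+1)(q+k+1)/n + (n+1)/(2n)`, that is,
`n ≤ 6(k+1)(q+k+1) + 3`, which is stronger than the claim.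
-/

open Finset Matrix

namespace PMF

theorem exists_mem_support_tsum_mul_le {β : Type*} (p : PMF β) {F : β → ℝ≥0∞}
    (hF : ∑' b, p b * F b ≠ ⊤) : ∃ b ∈ p.support, ∑' b, p b * F b ≤ F b := by
  by_contra! hlt
  obtain ⟨b₀, hb₀⟩ := p.support_nonempty
  have hle (b : β) : p b * F b ≤ p b * ∑' b, p b * F b := by
    by_cases hb : p b = 0
    · simp [hb]
    · gcongr
      exact (hlt b hb).le
  have := ENNReal.tsum_lt_tsum hF hle
    (ENNReal.mul_lt_mul_right hb₀ (p.apply_ne_top b₀) (hlt b₀ hb₀))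
  rw [ENNReal.tsum_mul_right, p.tsum_coe, one_mul] at this
  exact lt_irrefl _ this

theorem exists_mem_support_mul_card_le_card_filter {α β : Type*} (p : PMF β) (s : Finset α)
    (good : β → α → Prop) [∀ b, DecidablePred (good b)] {r : ℝ≥0∞}
    (h : ∀ x ∈ s, r ≤ p.toOuterMeasure {b | good b x}) :
    ∃ b ∈ p.support, r * #s ≤ #{x ∈ s | good b x} := by
  have hmean : ∑ x ∈ s, p.toOuterMeasure {b | good b x} = ∑' b, p b * #{x ∈ s | good b x} := by
    simp_rw [PMF.toOuterMeasure_apply]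
    rw [← Summable.tsum_finsetSum fun _ _ => ENNReal.summable]
    refine tsum_congr fun b => ?_
    simp only [Set.indicator_apply, Set.mem_ofPred_eq]
    rw [← sum_filter, sum_const, nsmul_eq_mul, mul_comm]
  have hfin : ∑' b, p b * #{x ∈ s | good b x} ≠ ⊤ := by
    refine ne_top_of_le_ne_top (ENNReal.natCast_ne_top #s) ?_
    calc ∑' b, p b * #{x ∈ s | good b x} ≤ ∑' b, p b * #s := by
          gcongr with b
          exact filter_subset _ s
      _ = #s := by rw [ENNReal.tsum_mul_right, p.tsum_coe, one_mul]
  obtain ⟨b, hb, hle⟩ := p.exists_mem_support_tsum_mul_le hfin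
  refine ⟨b, hb, le_trans ?_ hle⟩
  calc r * #s = ∑ x ∈ s, r := by rw [sum_const, nsmul_eq_mul, mul_comm]
    _ ≤ _ := sum_le_sum h
    _ = _ := hmean

end PMF

namespace Adaptivity

theorem two_mul_le_three_mul_of_two_thirds_mul_le {a b : ℕ} (h : (2 / 3 : ℝ≥0∞) * a ≤ b) :
    2 * a ≤ 3 * b := by
  have h3 : (3 : ℝ≥0∞) * (2 / 3) = 2 := ENNReal.mul_div_cancel (by norm_num) (by norm_num)
  have : (3 : ℝ≥0∞) * (2 / 3 * a) ≤ 3 * b := by gcongr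
  rw [← mul_assoc, h3] at this
  exact_mod_cast this

section AffineSlices

variable {K ι : Type*} [Fintype ι] [DecidableEq ι]

theorem exists_dotProduct_eq_zero_and_eq_one [Field K] {S : Set (ι → K)} {v₀ : ι → K}
    (h : v₀ ∉ Submodule.span K S) : ∃ w, (∀ v ∈ S, v ⬝ᵥ w = 0) ∧ v₀ ⬝ᵥ w = 1 := by
  obtain ⟨f, hfv₀, hf⟩ := Submodule.exists_dual_map_eq_bot_of_notMem h inferInstance
  have hf_eq (v : ι → K) : v ⬝ᵥ (dotProductEquiv K ι).symm f = f v := by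
    rw [dotProduct_comm, ← dotProductEquiv_apply_apply, LinearEquiv.apply_symm_apply]
  refine ⟨(f v₀)⁻¹ • (dotProductEquiv K ι).symm f, fun v hv => ?_, ?_⟩
  · have hfv : f v ∈ (Submodule.span K S).map f :=
      Submodule.mem_map_of_mem (Submodule.subset_span hv)
    rw [hf, Submodule.mem_bot] at hfv
    rw [dotProduct_smul, hf_eq, hfv, smul_zero]
  · rw [dotProduct_smul, hf_eq, smul_eq_mul, inv_mul_cancel₀ hfv₀]

variable [Fintype K] [DecidableEq K] (S : Finset (ι → K)) (x₀ : ι → K)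

def slice [CommSemiring K] : Finset (ι → K) := {x | ∀ v ∈ S, v ⬝ᵥ x = v ⬝ᵥ x₀}

@[simp]
theorem mem_slice [CommSemiring K] {x : ι → K} : x ∈ slice S x₀ ↔ ∀ v ∈ S, v ⬝ᵥ x = v ⬝ᵥ x₀ := by
  simp [slice]

theorem card_slice_filter_eq [CommRing K] {v₀ w : ι → K} (hw : ∀ v ∈ S, v ⬝ᵥ w = 0)
    (hw₀ : v₀ ⬝ᵥ w = 1) (P : K → Prop) [DecidablePred P] :
    #{x ∈ slice S x₀ | P (v₀ ⬝ᵥ x)} = #{x ∈ slice S x₀ | v₀ ⬝ᵥ x = 0} * #{a | P a} := by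
  have hshift (y : ι → K) (a : K) :
      (∀ v ∈ S, v ⬝ᵥ (y + a • w) = v ⬝ᵥ y) ∧ v₀ ⬝ᵥ (y + a • w) = v₀ ⬝ᵥ y + a := by
    refine ⟨fun v hv => ?_, ?_⟩
    · rw [dotProduct_add, dotProduct_smul, hw v hv, smul_zero, add_zero]
    · rw [dotProduct_add, dotProduct_smul, hw₀, smul_eq_mul, mul_one]
  rw [← card_product]
  symm
  refine card_bij' (fun ya _ => ya.1 + ya.2 • w) (fun x _ => (x + (-(v₀ ⬝ᵥ x)) • w, v₀ ⬝ᵥ x))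
    ?_ ?_ ?_ ?_
  · rintro ⟨y, a⟩ h
    simp only [mem_product, mem_filter, mem_slice, mem_univ, true_and] at h ⊢
    refine ⟨fun v hv => ((hshift y a).1 v hv).trans (h.1.1 v hv), ?_⟩
    rw [(hshift y a).2, h.1.2, zero_add]
    exact h.2
  · intro x h
    simp only [mem_product, mem_filter, mem_slice, mem_univ, true_and] at h ⊢
    obtain ⟨hS, hv₀⟩ := hshift x (-(v₀ ⬝ᵥ x))
    exact ⟨⟨fun v hv => (hS v hv).trans (h.1 v hv), by rw [hv₀, add_neg_cancel]⟩, h.2⟩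
  · rintro ⟨y, a⟩ h
    simp only [mem_product, mem_filter, mem_slice, mem_univ, true_and] at h
    rw [(hshift y a).2, h.1.2, zero_add, add_assoc, ← add_smul, add_neg_cancel, zero_smul,
      add_zero]
  · intro x _
    rw [add_assoc, ← add_smul, neg_add_cancel, zero_smul, add_zero]

theorem card_slice_filter_mul_card [Field K] {v₀ : ι → K}
    (hv₀ : v₀ ∉ Submodule.span K (S : Set (ι → K))) (P : K → Prop) [DecidablePred P] :
    #{x ∈ slice S x₀ | P (v₀ ⬝ᵥ x)} * Fintype.card K = #{a | P a} * #(slice S x₀) := by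
  obtain ⟨w, hw, hw₀⟩ := exists_dotProduct_eq_zero_and_eq_one hv₀
  have hslice := card_slice_filter_eq S x₀ hw hw₀ (fun _ => True)
  rw [filter_true_of_mem (fun _ _ => trivial), filter_true_of_mem (fun _ _ => trivial),
    card_univ] at hslice
  rw [card_slice_filter_eq S x₀ hw hw₀, hslice]
  ring

end AffineSlices

theorem mul_card_filter_le_sum_of_forall_fiber {α β : Type*} [Fintype α] [DecidableEq β]
    (Φ : α → β) (p : α → Prop) [DecidablePred p] (w : α → ℕ) (c : ℕ)
    (h : ∀ x₀, c * #{x ∈ {y | Φ y = Φ x₀} | p x} ≤ ∑ x ∈ {y | Φ y = Φ x₀}, w x) :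
    c * #{x | p x} ≤ ∑ x, w x := by
  have hmaps {s : Finset α} (x : α) (_ : x ∈ s) : Φ x ∈ univ.image Φ :=
    mem_image_of_mem Φ (mem_univ x)
  rw [card_eq_sum_card_fiberwise hmaps, mul_sum, ← sum_fiberwise_of_maps_to hmaps]
  refine sum_le_sum fun b hb => ?_
  obtain ⟨x₀, -, rfl⟩ := mem_image.mp hb
  simpa only [filter_filter, and_comm] using h x₀

theorem card_filter_single_mem_le {K ι : Type*} [Field K] [Fintype ι] [DecidableEq ι]
    (M : Submodule K (ι → K)) [DecidablePred (· ∈ M)] :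
    #{i | Pi.single i (1 : K) ∈ M} ≤ Module.finrank K M := by
  set s : Finset ι := {i | Pi.single i (1 : K) ∈ M}
  have hli : LinearIndependent K fun i : s => (Pi.single (i : ι) (1 : K) : ι → K) := by
    simpa [Function.comp_def] using
      (Pi.basisFun K ι).linearIndependent.comp ((↑) : s → ι) Subtype.val_injective
  have hspan : Submodule.span K (Set.range fun i : s => (Pi.single (i : ι) (1 : K) : ι → K)) ≤ M :=
    Submodule.span_le.mpr <| by
      rintro _ ⟨i, rfl⟩
      exact (mem_filter.mp i.2).2
  calc #s = Fintype.card s := (Fintype.card_coe s).symm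
    _ = _ := (finrank_span_eq_card hli).symm
    _ ≤ Module.finrank K M := Submodule.finrank_mono hspan

theorem two_mul_card_filter_val_parity_le {n : ℕ} [NeZero n] (b : Bool) :
    2 * #{a : ZMod n | (a.val % 2 == 0) = b} ≤ n + 1 := by
  have hcard : #{a : ZMod n | (a.val % 2 == 0) = b} =
      Nat.count (· ≡ (if b then 0 else 1) [MOD 2]) n := by
    rw [Nat.count_eq_card_filter_range]
    refine card_nbij (·.val) (fun a ha => ?_) (fun a _ a' _ h => ZMod.val_injective n h)
      (fun v hv => ?_)
    · simp only [coe_filter, mem_univ, true_and, Set.mem_ofPred_eq, mem_range] at ha ⊢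
      refine ⟨ZMod.val_lt a, ?_⟩
      cases b <;> simp_all [Nat.ModEq]
    · simp only [coe_filter, mem_range, Set.mem_ofPred_eq] at hv
      refine ⟨(v : ZMod n), ?_, ZMod.val_cast_of_lt hv.1⟩
      simp only [coe_filter, mem_univ, true_and, Set.mem_ofPred_eq, ZMod.val_cast_of_lt hv.1]
      cases b <;> simp_all [Nat.ModEq]
  rw [hcard, Nat.count_modEq_card _ two_pos]
  split_ifs <;> omega

section Transcripts

variable {D R O : Type} [DecidableEq D] {k : ℕ} (T : DetAlg D R O k)

theorem view_eq_view_iff {f f' : D → R} {Q Q' : Finset D} :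
    view f Q = view f' Q' ↔ Q = Q' ∧ ∀ v ∈ Q, f v = f' v := by
  constructor
  · intro h
    have hmem (v : D) : v ∈ Q ↔ v ∈ Q' := by
      have := congrFun h v
      unfold view at this
      split_ifs at this <;> simp_all
    refine ⟨Finset.ext hmem, fun v hv => ?_⟩
    simpa [view, hv, (hmem v).mp hv] using congrFun h v
  · rintro ⟨rfl, h⟩
    funext v
    unfold view
    split_ifs with hv
    · rw [h v hv]
    · rfl

theorem seen_mono (f : D → R) : Monotone (T.seen f) :=
  monotone_nat_of_le_succ fun _ => subset_union_left

theorem seen_eq_of_eqOn {f f' : D → R} {m : ℕ} (h : ∀ v ∈ T.seen f m, f' v = f v) :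
    T.seen f' m = T.seen f m := by
  induction m with
  | zero => rfl
  | succ m ih =>
    have hseen := ih fun v hv => h v (seen_mono T f m.le_succ hv)
    have hview : view f' (T.seen f m) = view f (T.seen f m) :=
      view_eq_view_iff.mpr ⟨rfl, fun v hv => h v (seen_mono T f m.le_succ hv)⟩
    simp only [DetAlg.seen, hseen, hview]

theorem seen_succ_eq_of_eqOn {f f' : D → R} {m : ℕ} (h : ∀ v ∈ T.seen f m, f' v = f v) :
    T.seen f' (m + 1) = T.seen f (m + 1) := by
  have hseen := seen_eq_of_eqOn T h
  have hview : view f' (T.seen f m) = view f (T.seen f m) := view_eq_view_iff.mpr ⟨rfl, h⟩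
  simp only [DetAlg.seen, hseen, hview]

theorem run_eq_of_eqOn {f f' : D → R} (h : ∀ v ∈ T.seen f (k + 1), f' v = f v) :
    T.run f' = T.run f :=
  congrArg T.out <| view_eq_view_iff.mpr ⟨seen_eq_of_eqOn T h, fun v hv =>
    h v (seen_eq_of_eqOn T h ▸ hv)⟩

theorem card_seen_le_totalQueries (f : D → R) {m : ℕ} (hm : m ≤ k + 1) :
    #(T.seen f m) ≤ T.totalQueries f := by
  have hsub : T.seen f m ⊆ univ.biUnion (T.queries f) := by
    induction m with
    | zero => exact empty_subset _
    | succ m ih =>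
      rw [DetAlg.seen, dif_pos (show m < k + 1 by omega)]
      exact union_subset (ih (by omega))
        (subset_biUnion_of_mem (T.queries f) (mem_univ (⟨m, hm⟩ : Fin (k + 1))))
  exact (card_le_card hsub).trans card_biUnion_le

theorem run_eq_of_totalQueries_eq_zero {f : D → R} (h : T.totalQueries f = 0) :
    T.run f = T.out fun _ => none := by
  have hseen : T.seen f (k + 1) = ∅ :=
    card_eq_zero.mp (Nat.le_zero.mp (h ▸ card_seen_le_totalQueries T f le_rfl))
  rw [DetAlg.run, hseen]
  exact congrArg T.out (funext fun v => if_neg (notMem_empty v))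

end Transcripts

section Pointers

variable {n : ℕ} [NeZero n]

/-- The 0-based index of the coordinate read by `g_j`. -/
def pointer (x : Fin n → ZMod n) : ℕ → Fin n
  | 0 => 0
  | j + 1 => ⟨(x (pointer x j)).val, ZMod.val_lt _⟩

theorem gIter_eq_pointer (x : Fin n → ZMod n) (j : ℕ) : gIter n x j = x (pointer x j) := by
  induction j with
  | zero => simp [gIter, pointer, Nat.pos_of_neZero n]
  | succ j ih => simp only [gIter, ZMod.val_lt, dif_pos, pointer, ih]

theorem pointer_eq_of_eqOn {x x' : Fin n → ZMod n} {m : ℕ}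
    (h : ∀ t < m, x' (pointer x t) = x (pointer x t)) : ∀ t ≤ m, pointer x' t = pointer x t := by
  intro t ht
  induction t with
  | zero => rfl
  | succ t ih => simp only [pointer, ih (by omega), h t ht]

variable {O : Type} {k : ℕ} (T : DetAlg (Fin n → ZMod n) (ZMod n) O k)

/-- The queries asked in the first `m` rounds, together with the unit vectors of the coordinates
read by `g_0, …, g_{m-1}`, which the analysis reveals to the algorithm for free. -/
def knowledge (x : Fin n → ZMod n) (m : ℕ) : Finset (Fin n → ZMod n) :=
  T.seen (linOracle n x) m ∪ (range m).image fun t => Pi.single (pointer x t) 1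

def PointerKnown (m : ℕ) (x : Fin n → ZMod n) : Prop :=
  Pi.single (pointer x m) 1 ∈ Submodule.span (ZMod n) (knowledge T x m : Set (Fin n → ZMod n))

def transcript (m : ℕ) (x : Fin n → ZMod n) : (Fin n → ZMod n) → Option (ZMod n) :=
  view (linOracle n x) (knowledge T x m)

variable {T} {m : ℕ} {x₀ x : Fin n → ZMod n}

theorem linOracle_eq_of_mem_slice (hx : x ∈ slice (knowledge T x₀ m) x₀) :
    ∀ v ∈ T.seen (linOracle n x₀) m, linOracle n x v = linOracle n x₀ v :=
  fun v hv => (mem_slice _ _).mp hx v (mem_union_left _ hv)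

theorem pointer_eq_of_mem_slice (hx : x ∈ slice (knowledge T x₀ m) x₀) :
    ∀ t ≤ m, pointer x t = pointer x₀ t := by
  refine pointer_eq_of_eqOn fun t ht => ?_
  have := (mem_slice _ _).mp hx (Pi.single (pointer x₀ t) 1)
    (mem_union_right _ (mem_image_of_mem _ (mem_range.mpr ht)))
  simpa only [single_one_dotProduct] using this

theorem knowledge_eq_of_mem_slice (hx : x ∈ slice (knowledge T x₀ m) x₀) :
    knowledge T x m = knowledge T x₀ m := by
  rw [knowledge, knowledge, seen_eq_of_eqOn T (linOracle_eq_of_mem_slice hx)]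
  congr 1
  exact image_congr fun t ht => by
    rw [pointer_eq_of_mem_slice hx t (mem_range.mp ht).le]

theorem knowledge_succ_eq_of_mem_slice (hx : x ∈ slice (knowledge T x₀ m) x₀) :
    knowledge T x (m + 1) = knowledge T x₀ (m + 1) := by
  rw [knowledge, knowledge, seen_succ_eq_of_eqOn T (linOracle_eq_of_mem_slice hx)]
  congr 1
  exact image_congr fun t ht => by
    rw [pointer_eq_of_mem_slice hx t (Nat.lt_succ_iff.mp (mem_range.mp ht))]

theorem mem_slice_iff_transcript_eq :
    x ∈ slice (knowledge T x₀ m) x₀ ↔ transcript T m x = transcript T m x₀ := by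
  refine ⟨fun hx => view_eq_view_iff.mpr ⟨knowledge_eq_of_mem_slice hx, fun v hv => ?_⟩,
    fun h => (mem_slice _ _).mpr fun v hv => ?_⟩
  · exact (mem_slice _ _).mp hx v (knowledge_eq_of_mem_slice hx ▸ hv)
  · obtain ⟨hknow, hlin⟩ := view_eq_view_iff.mp h
    exact hlin v (hknow ▸ hv)

theorem gIter_eq_of_mem_slice (hx : x ∈ slice (knowledge T x₀ m) x₀) :
    gIter n x m = Pi.single (pointer x₀ m) 1 ⬝ᵥ x := by
  rw [gIter_eq_pointer, single_one_dotProduct, pointer_eq_of_mem_slice hx m le_rfl]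

theorem pointerKnown_iff_of_mem_slice (hx : x ∈ slice (knowledge T x₀ m) x₀) :
    PointerKnown T m x ↔ PointerKnown T m x₀ := by
  rw [PointerKnown, PointerKnown, knowledge_eq_of_mem_slice hx,
    pointer_eq_of_mem_slice hx m le_rfl]

theorem pointerKnown_succ_iff_of_mem_slice (hx : x ∈ slice (knowledge T x₀ m) x₀) :
    PointerKnown T (m + 1) x ↔ Pi.single (⟨(gIter n x m).val, ZMod.val_lt _⟩ : Fin n) 1 ∈
      Submodule.span (ZMod n) (knowledge T x₀ (m + 1) : Set (Fin n → ZMod n)) := by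
  rw [PointerKnown, knowledge_succ_eq_of_mem_slice hx, gIter_eq_pointer]
  rfl

theorem run_eq_of_mem_slice (hx : x ∈ slice (knowledge T x₀ (k + 1)) x₀) :
    T.run (linOracle n x) = T.run (linOracle n x₀) :=
  run_eq_of_eqOn T (linOracle_eq_of_mem_slice hx)

theorem card_knowledge_le (x : Fin n → ZMod n) (hm : m ≤ k + 1) :
    #(knowledge T x m) ≤ T.totalQueries (linOracle n x) + m :=
  (card_union_le _ _).trans <| add_le_add (card_seen_le_totalQueries T _ hm)
    (card_image_le.trans (card_range m).le)

end Pointers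

section Counting

open scoped Classical

variable {n : ℕ} [Fact n.Prime] {O : Type} {k : ℕ} (T : DetAlg (Fin n → ZMod n) (ZMod n) O k)

theorem not_pointerKnown_zero (x : Fin n → ZMod n) : ¬ PointerKnown T 0 x := by
  simp [PointerKnown, knowledge, DetAlg.seen]

theorem filter_transcript_eq (m : ℕ) (x₀ : Fin n → ZMod n) :
    ({x | transcript T m x = transcript T m x₀} : Finset _) = slice (knowledge T x₀ m) x₀ := by
  ext x
  rw [mem_slice_iff_transcript_eq, mem_filter]
  exact and_iff_right (mem_univ x)

theorem card_slice_filter_gIter_mul {m : ℕ} {x₀ : Fin n → ZMod n} (h : ¬ PointerKnown T m x₀)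
    (P : ZMod n → Prop) [DecidablePred P] :
    #{x ∈ slice (knowledge T x₀ m) x₀ | P (gIter n x m)} * n =
      #{a | P a} * #(slice (knowledge T x₀ m) x₀) := by
  rw [filter_congr fun x hx => by rw [gIter_eq_of_mem_slice hx]]
  simpa only [ZMod.card] using card_slice_filter_mul_card _ x₀ h P

theorem mul_card_pointerKnown_succ_sdiff_le (j : ℕ) :
    n * #{x | PointerKnown T (j + 1) x ∧ ¬ PointerKnown T j x} ≤
      ∑ x, #(knowledge T x (j + 1)) := by
  refine mul_card_filter_le_sum_of_forall_fiber (transcript T j) _ _ _ fun x₀ => ?_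
  rw [filter_transcript_eq]
  by_cases hx₀ : PointerKnown T j x₀
  · rw [filter_false_of_mem fun x hx hnew => hnew.2 ((pointerKnown_iff_of_mem_slice hx).mpr hx₀)]
    simp
  set M := Submodule.span (ZMod n) (knowledge T x₀ (j + 1) : Set (Fin n → ZMod n))
  rw [filter_congr fun x hx => by
    rw [pointerKnown_succ_iff_of_mem_slice hx, pointerKnown_iff_of_mem_slice hx, and_iff_left hx₀]]
  have hM : #{a : ZMod n | Pi.single (⟨a.val, ZMod.val_lt a⟩ : Fin n) 1 ∈ M} ≤
      #(knowledge T x₀ (j + 1)) :=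
    calc _ ≤ #{i : Fin n | Pi.single i 1 ∈ M} :=
          card_le_card_of_injOn (fun a => ⟨a.val, ZMod.val_lt a⟩)
            (fun a ha => by simpa using ha) fun a _ a' _ h => ZMod.val_injective n (Fin.mk.inj h)
      _ ≤ Module.finrank (ZMod n) M := card_filter_single_mem_le M
      _ ≤ _ := finrank_span_finset_le_card _
  calc n * #{x ∈ slice (knowledge T x₀ j) x₀ | _} = _ :=
        (mul_comm _ _).trans (card_slice_filter_gIter_mul T hx₀ _)
    _ ≤ #(knowledge T x₀ (j + 1)) * #(slice (knowledge T x₀ j) x₀) := Nat.mul_le_mul_right _ hM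
    _ = ∑ x ∈ slice (knowledge T x₀ j) x₀, #(knowledge T x (j + 1)) := by
      rw [sum_congr rfl fun x hx => by rw [knowledge_succ_eq_of_mem_slice hx], sum_const,
        smul_eq_mul, mul_comm]

theorem mul_card_pointerKnown_le {Q : ℕ} (hQ : ∀ x, T.totalQueries (linOracle n x) ≤ Q)
    {j : ℕ} (hj : j ≤ k + 1) :
    n * #{x | PointerKnown T j x} ≤ j * (Q + k + 1) * Fintype.card (Fin n → ZMod n) := by
  induction j with
  | zero => simp [not_pointerKnown_zero]
  | succ j ih =>
    have hsub : ({x | PointerKnown T (j + 1) x} : Finset _) ⊆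
        ({x | PointerKnown T j x} : Finset _) ∪
          ({x | PointerKnown T (j + 1) x ∧ ¬ PointerKnown T j x} : Finset _) := by
      intro x hx
      by_cases h : PointerKnown T j x <;> simp_all
    have hknow : ∑ x, #(knowledge T x (j + 1)) ≤ Fintype.card (Fin n → ZMod n) * (Q + k + 1) :=
      sum_le_card_nsmul _ _ _ fun x _ => (card_knowledge_le x hj).trans (by linarith [hQ x])
    calc n * #{x | PointerKnown T (j + 1) x}
        ≤ n * #{x | PointerKnown T j x} +
            n * #{x | PointerKnown T (j + 1) x ∧ ¬ PointerKnown T j x} := by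
          rw [← mul_add]
          exact Nat.mul_le_mul_left n ((card_le_card hsub).trans (card_union_le _ _))
      _ ≤ j * (Q + k + 1) * Fintype.card (Fin n → ZMod n) +
            Fintype.card (Fin n → ZMod n) * (Q + k + 1) :=
          add_le_add (ih (by omega)) ((mul_card_pointerKnown_succ_sdiff_le T j).trans hknow)
      _ = (j + 1) * (Q + k + 1) * Fintype.card (Fin n → ZMod n) := by ring

end Counting

section Output

open scoped Classical

variable {n : ℕ} [Fact n.Prime] {k : ℕ} (T : DetAlg (Fin n → ZMod n) (ZMod n) Bool k)

theorem two_mul_card_run_eq_fAddr_not_pointerKnown_le :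
    2 * n * #{x | T.run (linOracle n x) = fAddr n x (k + 1) ∧ ¬ PointerKnown T (k + 1) x} ≤
      ∑ _x : Fin n → ZMod n, (n + 1) := by
  refine mul_card_filter_le_sum_of_forall_fiber (transcript T (k + 1)) _ _ _ fun x₀ => ?_
  rw [filter_transcript_eq]
  by_cases hx₀ : PointerKnown T (k + 1) x₀
  · rw [filter_false_of_mem fun x hx hx' => hx'.2 ((pointerKnown_iff_of_mem_slice hx).mpr hx₀)]
    simp
  rw [filter_congr fun x hx => by
    rw [run_eq_of_mem_slice hx, pointerKnown_iff_of_mem_slice hx, and_iff_left hx₀, fAddr,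
      eq_comm]]
  calc 2 * n * #{x ∈ slice (knowledge T x₀ (k + 1)) x₀ | _}
      = 2 * #{a : ZMod n | (a.val % 2 == 0) = T.run (linOracle n x₀)} *
          #(slice (knowledge T x₀ (k + 1)) x₀) := by
        rw [mul_assoc, mul_assoc, mul_comm n]
        congr 1
        exact card_slice_filter_gIter_mul T hx₀ fun a => (a.val % 2 == 0) = T.run (linOracle n x₀)
    _ ≤ (n + 1) * #(slice (knowledge T x₀ (k + 1)) x₀) :=
        Nat.mul_le_mul_right _ (two_mul_card_filter_val_parity_le _)
    _ = _ := by rw [sum_const, smul_eq_mul, mul_comm]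

theorem le_of_two_mul_card_le_three_mul_card_run_eq_fAddr {Q : ℕ}
    (hQ : ∀ x, T.totalQueries (linOracle n x) ≤ Q)
    (hT : 2 * Fintype.card (Fin n → ZMod n) ≤
      3 * #{x | T.run (linOracle n x) = fAddr n x (k + 1)}) :
    n ≤ 6 * (k + 1) * (Q + k + 1) + 3 := by
  set N := Fintype.card (Fin n → ZMod n)
  have hsplit : #{x | T.run (linOracle n x) = fAddr n x (k + 1)} ≤
      #{x | PointerKnown T (k + 1) x} +
        #{x | T.run (linOracle n x) = fAddr n x (k + 1) ∧ ¬ PointerKnown T (k + 1) x} := by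
    rw [← card_union_of_disjoint (disjoint_filter.mpr fun _ _ h h' => h'.2 h)]
    exact card_le_card fun x => by by_cases h : PointerKnown T (k + 1) x <;> simp_all
  have hknown := mul_card_pointerKnown_le T hQ le_rfl
  have hcorrect := two_mul_card_run_eq_fAddr_not_pointerKnown_le T
  rw [sum_const, card_univ, smul_eq_mul] at hcorrect
  refine Nat.le_of_mul_le_mul_right ?_ (Fintype.card_pos : 0 < N)
  linarith [Nat.mul_le_mul_left (2 * n) hT, Nat.mul_le_mul_left (6 * n) hsplit]

end Output

theorem fAddr_zero {n : ℕ} [NeZero n] (j : ℕ) : fAddr n 0 j = true := by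
  simp [fAddr, gIter_eq_pointer]

theorem fAddr_one {n : ℕ} [Fact (1 < n)] (j : ℕ) : fAddr n (fun _ => 1) j = false := by
  simp [fAddr, gIter_eq_pointer, ZMod.val_one]

/-- A correct algorithm must query something: otherwise it could not tell the all-zeros input
(where `f_{k+1} = 1`) from the all-ones input (where `f_{k+1} = 0`). -/
theorem one_le_of_computesLDT {n k : ℕ} [Fact (1 < n)] {q : ℝ}
    {A : PMF (DetAlg (Fin n → ZMod n) (ZMod n) Bool k)}
    (hA : ComputesLDT n q A fun x => fAddr n x (k + 1)) : 1 ≤ q := by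
  set s : Finset (Fin n → ZMod n) := {0, fun _ => 1}
  have hs : #s = 2 :=
    card_pair fun h => zero_ne_one (congrFun h ⟨0, Nat.zero_lt_of_lt (Fact.out : 1 < n)⟩)
  obtain ⟨T, hT, hcorrect⟩ := A.exists_mem_support_mul_card_le_card_filter s
    (fun T x => T.run (linOracle n x) = fAddr n x (k + 1)) fun x _ => hA.2 x
  have hall : {x ∈ s | T.run (linOracle n x) = fAddr n x (k + 1)} = s := by
    have := two_mul_le_three_mul_of_two_thirds_mul_le hcorrect
    exact eq_of_subset_of_card_le (filter_subset _ _) (by omega)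
  have hcorrect_on (x) (hx : x ∈ s) : T.run (linOracle n x) = fAddr n x (k + 1) := by
    rw [← hall] at hx
    exact (mem_filter.mp hx).2
  by_contra! hq
  have hzero (x : Fin n → ZMod n) : T.totalQueries (linOracle n x) = 0 := by
    have := hA.1 T hT x
    exact Nat.lt_one_iff.mp (by exact_mod_cast (show (T.totalQueries (linOracle n x) : ℝ) < 1 by
      linarith))
  have h0 := hcorrect_on 0 (mem_insert_self _ _)
  have h1 := hcorrect_on (fun _ => 1) (mem_insert_of_mem (mem_singleton_self _))
  rw [run_eq_of_totalQueries_eq_zero T (hzero _), fAddr_zero] at h0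
  rw [run_eq_of_totalQueries_eq_zero T (hzero _), fAddr_one, h0] at h1
  exact Bool.noConfusion h1

theorem div_le_of_le_six_mul_add {n K L q : ℝ} (hK : 1 ≤ K) (hL : 1 ≤ L) (hq : 1 ≤ q)
    (h : n ≤ 6 * K * (q + K) + 3) : 1 / 100 * n / (K ^ 2 * L) ≤ q := by
  rw [div_le_iff₀ (by positivity)]
  suffices 1 / 100 * n ≤ q * K ^ 2 from
    this.trans ((le_mul_of_one_le_right (mul_nonneg (by linarith) (sq_nonneg K)) hL).trans_eq
      (mul_assoc _ _ _))
  by_cases hsmall : 1 / 100 * n ≤ K ^ 2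
  · nlinarith
  · nlinarith

theorem one_le_log_of_three_le {x : ℝ} (hx : 3 ≤ x) : 1 ≤ Real.log x := by
  rw [Real.le_log_iff_exp_le (by linarith)]
  linarith [Real.exp_one_lt_d9]

end Adaptivity

open Adaptivity in
/-- There is an absolute constant `c > 0` such that for every prime
`n ≥ 3` and every `0 ≤ k ≤ c·(n/log n)^{1/3}`, every randomized `(k,q)`-round-adaptive
linear decision tree computing the `(k+1)`-iterated address function `f_{k+1}`
satisfies `q ≥ c·n/((k+1)²·log n)`. -/
theorem randLDT_lower_bound :
    ∃ c : ℝ, 0 < c ∧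
      ∀ n : ℕ, n.Prime → 3 ≤ n →
        ∀ k : ℕ, (k : ℝ) ≤ c * ((n : ℝ) / Real.log n) ^ ((1 : ℝ) / 3) →
          ∀ q : ℝ, ∀ A : PMF (DetAlg (Fin n → ZMod n) (ZMod n) Bool k),
            ComputesLDT n q A (fun x => fAddr n x (k + 1)) →
              c * (n : ℝ) / (((k : ℝ) + 1) ^ 2 * Real.log n) ≤ q := by
  refine ⟨1 / 100, by norm_num, fun n hp hn k _ q A hA => ?_⟩
  have := Fact.mk hp
  have : Fact (1 < n) := ⟨hp.one_lt⟩
  obtain ⟨T, hT, hcorrect⟩ := A.exists_mem_support_mul_card_le_card_filter univ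
    (fun T x => T.run (linOracle n x) = fAddr n x (k + 1)) fun x _ => hA.2 x
  have hdet : (n : ℝ) ≤ 6 * (k + 1) * (⌊q⌋₊ + k + 1) + 3 := by
    exact_mod_cast le_of_two_mul_card_le_three_mul_card_run_eq_fAddr T
      (fun x => Nat.le_floor (hA.1 T hT x))
      (two_mul_le_three_mul_of_two_thirds_mul_le (by simpa using hcorrect))
  have hq := one_le_of_computesLDT hA
  have hfloor : (⌊q⌋₊ : ℝ) ≤ q := Nat.floor_le (by linarith)
  refine div_le_of_le_six_mul_add (by linarith [k.cast_nonneg (α := ℝ)])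
    (one_le_log_of_three_le (by exact_mod_cast hn)) hq ?_
  nlinarith [k.cast_nonneg (α := ℝ)]
end

section
/- Let n be a prime and let C : 𝔽_n^n → 𝔽_n^m be an injective 𝔽_n-linear map; let δ(C) ∈ (0,1] be its relative distance (the minimum relative Hamming distance between distinct codewords) and let 𝒞 := C(𝔽_n^n). Suppose: (LTC) there exist q_T ∈ ℕ, a₁ > 0, c₁ ≥ 1 and a randomized non-adaptive algorithm making at most q_T queries to an oracle w : [m] → 𝔽_n that accepts every w ∈ 𝒞 with probability 1 and rejects every w ∉ 𝒞 with probability at least a₁·dist(w,𝒞)^{c₁}; (relaxed-LDC) there exist δ_r ∈ (0, δ(C)/2), q_D ∈ ℕ and a randomized non-adaptive algorithm D that, on index i ∈ [n], makes at most q_D queries to w and outputs an element of 𝔽_n or ⊥, such that for every x and i, D^{C(x)}(i) = x_i with probability 1, and for every w with dist(w, C(x)) ≤ δ_r for some codeword C(x), Pr[D^w(i) ∈ {x_i, ⊥}] ≥ 2/3. Then there is a constant A (depending only on q_T and q_D) such that for every f : 𝔽_n^n → {0,1} admitting a randomized (k,q)-round-adaptive decision tree algorithm, and every ε ∈ (0,1],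 the property C_f := {C(x) : f(x) = 1} (assumed nonempty) has a (k, q')-round-adaptive ε-tester with q' ≤ A·q·(log₂(q)+2) + A·⌈1/(a₁·min(δ_r,ε)^{c₁})⌉. Moreover, if the decision tree algorithm outputs f(x) with probability 1 for every x, then the tester is one-sided. -/
open scoped ENNReal BigOperators

/-!
The tester reads the input word `w` as an encoding `C x` and runs the decision tree on `x`,
answering each query `xᵢ` with the relaxed local decoder for `i`, repeated `log₂ q + 7` times
and trusted only when unanimous; a `⊥` answer makes it reject. Alongside, it runs the code
tester `M ≈ 2 / (a₁ μ^c₁)` times, `μ = min δ_r ε`, and accepts iff all of those accept and the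
majority of three independent simulations accepts.

On a codeword `C x` with `f x = 1` the code tester and the decoders never err, so a simulation
is just the decision tree on `x`. A word that is `ε`-far from `C_f` is either `μ`-far from the
code, and then one of the `M` code tester runs rejects with probability `≥ 1 - e⁻²`, or `μ`-close
to some `C x` with `f x = 0`. In the latter case only a decoder answering neither `xᵢ` nor `⊥`
can mislead a simulation, which happens on one of its at most `q` queries with probability
`≤ q 3^-(log₂ q + 7) ≤ 1/60`; the majority vote turns the per-simulation error `1/3 + 1/60`
into at most `1/3`.
-/

namespace ENNReal

lemma one_sub_le_one_third {a : ℝ≥0∞} (h : 2 / 3 ≤ a) : 1 - a ≤ 1 / 3 := by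
  refine (tsub_le_tsub_left h 1).trans_eq (ENNReal.sub_eq_of_eq_add (by simp [div_eq_top]) ?_)
  rw [ENNReal.div_add_div_same, ENNReal.div_eq_inv_mul]
  norm_num
  exact (ENNReal.inv_mul_cancel (by norm_num) (by norm_num)).symm

lemma two_thirds_le_one_sub {a : ℝ≥0∞} (h : a ≤ 1 / 3) : 2 / 3 ≤ 1 - a := by
  refine le_of_eq_of_le (ENNReal.sub_eq_of_eq_add (by simp) ?_).symm (tsub_le_tsub_left h 1)
  rw [ENNReal.div_add_div_same, ENNReal.div_eq_inv_mul]
  norm_num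
  exact (ENNReal.inv_mul_cancel (by norm_num) (by norm_num)).symm

lemma ofReal_div_ofNat (a b : ℕ) [a.AtLeastTwo] [b.AtLeastTwo] :
    ENNReal.ofReal (OfNat.ofNat a / OfNat.ofNat b) = (OfNat.ofNat a / OfNat.ofNat b : ℝ≥0∞) := by
  rw [ENNReal.ofReal_div_of_pos Nat.ofNat_pos, ENNReal.ofReal_ofNat, ENNReal.ofReal_ofNat]

lemma one_third_le_seven_twentieths : (1 / 3 : ℝ≥0∞) ≤ 7 / 20 := by
  rw [← ofReal_div_ofNat, ← ENNReal.ofReal_one, ← ENNReal.ofReal_ofNat 3,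
    ← ENNReal.ofReal_div_of_pos (by norm_num)]
  exact ENNReal.ofReal_le_ofReal (by norm_num)

/-- The error `3 e² - 2 e³` of a majority vote of three independent runs with error `e`. -/
lemma majority_error_le {e : ℝ≥0∞} (he : e ≤ 7 / 20) :
    e * e + e * (1 - e) * e + (1 - e) * e * e ≤ 1 / 3 := by
  obtain ⟨t, ht0, rfl⟩ : ∃ t : ℝ, 0 ≤ t ∧ e = ENNReal.ofReal t :=
    ⟨_, ENNReal.toReal_nonneg, (ENNReal.ofReal_toReal (he.trans_lt (by simp [div_lt_top])).ne).symm⟩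
  rw [← ofReal_div_ofNat, ENNReal.ofReal_le_ofReal_iff (by norm_num)] at he
  have h1t : 0 ≤ 1 - t := by linarith
  rw [← ENNReal.ofReal_one, ← ENNReal.ofReal_sub _ ht0, ← ENNReal.ofReal_mul ht0,
    ← ENNReal.ofReal_mul ht0, ← ENNReal.ofReal_mul h1t, ← ENNReal.ofReal_mul (by positivity),
    ← ENNReal.ofReal_mul (by positivity), ← ENNReal.ofReal_add (by positivity) (by positivity),
    ← ENNReal.ofReal_add (by positivity) (by positivity), ← ENNReal.ofReal_ofNat 3,
    ← ENNReal.ofReal_div_of_pos (by norm_num)]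
  exact ENNReal.ofReal_le_ofReal
    (by nlinarith [mul_nonneg (mul_nonneg ht0 ht0) (by linarith : (0 : ℝ) ≤ 7 / 20 - t)])

lemma one_sub_ofReal_pow_le_one_third {s : ℝ} {M : ℕ} (hsM : 2 ≤ s * M) :
    (1 - ENNReal.ofReal s) ^ M ≤ 1 / 3 := by
  have hexp : 1 - ENNReal.ofReal s ≤ ENNReal.ofReal (Real.exp (-s)) := by
    rcases le_total 0 s with hs | hs
    · rw [← ENNReal.ofReal_one, ← ENNReal.ofReal_sub _ hs]
      exact ENNReal.ofReal_le_ofReal (by linarith [Real.add_one_le_exp (-s)])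
    · simp [ENNReal.ofReal_of_nonpos hs, Real.one_le_exp (neg_nonneg.2 hs)]
  calc (1 - ENNReal.ofReal s) ^ M ≤ ENNReal.ofReal (Real.exp (-s)) ^ M := by gcongr
    _ = ENNReal.ofReal (Real.exp (-(s * M))) := by
      rw [← ENNReal.ofReal_pow (Real.exp_pos _).le, ← Real.exp_nat_mul]
      ring_nf
    _ ≤ ENNReal.ofReal (1 / 3) := by
      refine ENNReal.ofReal_le_ofReal ?_
      rw [Real.exp_neg, one_div]
      refine inv_anti₀ (by norm_num) ((?_ : (3 : ℝ) ≤ Real.exp 2).trans (Real.exp_le_exp.2 hsM))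
      linarith [Real.add_one_le_exp 2]
    _ = 1 / 3 := by rw [ENNReal.ofReal_div_of_pos] <;> norm_num

/-- `q < 2 ^ (log₂ q + 1)` gives `q 3^-(log₂ q + 7) ≤ 1/60`, and `1/3 + 1/60 = 7/20`. -/
lemma one_third_add_mul_pow_le (q : ℕ) :
    1 / 3 + q * (1 / 3) ^ (Nat.log 2 q + 7) ≤ (7 / 20 : ℝ≥0∞) := by
  have hq : (60 * q : ℝ) ≤ 3 ^ (Nat.log 2 q + 7) := by
    have h2 : (q : ℝ) ≤ 2 ^ Nat.log 2 q * 2 := by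
      have := Nat.lt_pow_succ_log_self (b := 2) (by norm_num) q
      rw [pow_succ] at this
      exact_mod_cast this.le
    have h23 : (2 : ℝ) ^ (Nat.log 2 q + 7) ≤ 3 ^ (Nat.log 2 q + 7) := by gcongr; norm_num
    rw [pow_add] at h23
    nlinarith [pow_pos (by norm_num : (0 : ℝ) < 2) (Nat.log 2 q)]
  rw [← ofReal_div_ofNat 7 20, ← ENNReal.ofReal_natCast, ← ENNReal.ofReal_one,
    ← ENNReal.ofReal_ofNat 3, ← ENNReal.ofReal_div_of_pos (by norm_num),
    ← ENNReal.ofReal_pow (by norm_num), ← ENNReal.ofReal_mul (by positivity),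
    ← ENNReal.ofReal_add (by norm_num) (by positivity)]
  refine ENNReal.ofReal_le_ofReal ?_
  have : (q : ℝ) * (1 / 3) ^ (Nat.log 2 q + 7) ≤ 1 / 60 := by
    rw [div_pow, one_pow, mul_one_div, div_le_iff₀ (by positivity)]
    linarith
  linarith

end ENNReal

def majority (o : Fin 3 → Bool) : Bool := o 0 && o 1 || o 0 && o 2 || o 1 && o 2

lemma majority_not (o : Fin 3 → Bool) : majority (fun i => !o i) = !majority o := by
  revert o
  decide

namespace PMF

variable {α β : Type}

lemma toOuterMeasure_add_compl (p : PMF α) (s : Set α) :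
    p.toOuterMeasure s + p.toOuterMeasure sᶜ = 1 := by
  rw [toOuterMeasure_apply, toOuterMeasure_apply, ← ENNReal.tsum_add, ← p.tsum_coe]
  exact tsum_congr fun a => by by_cases ha : a ∈ s <;> simp [ha]

lemma toOuterMeasure_le_one (p : PMF α) (s : Set α) : p.toOuterMeasure s ≤ 1 :=
  p.toOuterMeasure_add_compl s ▸ le_self_add

lemma toOuterMeasure_compl (p : PMF α) (s : Set α) :
    p.toOuterMeasure sᶜ = 1 - p.toOuterMeasure s :=
  ENNReal.eq_sub_of_add_eq (ne_top_of_le_ne_top ENNReal.one_ne_top (p.toOuterMeasure_le_one s))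
    (by rw [add_comm, p.toOuterMeasure_add_compl])

lemma toOuterMeasure_bind_le (p : PMF α) (F : α → PMF β) {s : Set β} {t : Set α} {c : ℝ≥0∞}
    (h : ∀ a ∈ p.support, (F a).toOuterMeasure s ≤ t.indicator 1 a + c) :
    (p.bind F).toOuterMeasure s ≤ p.toOuterMeasure t + c := by
  rw [toOuterMeasure_bind_apply, toOuterMeasure_apply, ← one_mul c, ← p.tsum_coe,
    ← ENNReal.tsum_mul_right, ← ENNReal.tsum_add]
  refine ENNReal.tsum_le_tsum fun a => ?_
  by_cases ha : a ∈ p.support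
  · calc p a * (F a).toOuterMeasure s ≤ p a * (t.indicator 1 a + c) := by gcongr; exact h a ha
      _ = t.indicator p a + p a * c := by by_cases hat : a ∈ t <;> simp [hat, mul_add]
  · simp [(mem_support_iff p a).not_left.mp ha]

noncomputable def piFin : {N : ℕ} → (Fin N → PMF β) → PMF (Fin N → β)
  | 0, _ => PMF.pure Fin.elim0
  | _ + 1, A => (A 0).bind fun b => (piFin fun i => A i.succ).map (Fin.cons b)

lemma toOuterMeasure_piFin_pi : ∀ {N : ℕ} (A : Fin N → PMF β) (S : Fin N → Set β),
    (piFin A).toOuterMeasure (Set.univ.pi S) = ∏ i, (A i).toOuterMeasure (S i)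
  | 0, A, S => by simp [piFin, Subsingleton.elim _ (default : Fin 0 → β)]
  | N + 1, A, S => by
    rw [piFin, toOuterMeasure_bind_apply, Fin.prod_univ_succ, ← toOuterMeasure_piFin_pi,
      toOuterMeasure_apply (A 0), ← ENNReal.tsum_mul_right]
    refine tsum_congr fun b => ?_
    rw [toOuterMeasure_map_apply]
    by_cases hb : b ∈ S 0
    · have : Fin.cons b ⁻¹' Set.univ.pi S = Set.univ.pi fun i => S i.succ := by
        ext g
        simp [Fin.forall_fin_succ, hb]
      simp [this, hb]
    · have : Fin.cons b ⁻¹' Set.univ.pi S = (∅ : Set (Fin N → β)) := by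
        ext g
        simp [Fin.forall_fin_succ, hb]
      simp [this, hb]

lemma toOuterMeasure_piFin_eval {N : ℕ} (A : Fin N → PMF β) (i : Fin N) (S : Set β) :
    (piFin A).toOuterMeasure {g | g i ∈ S} = (A i).toOuterMeasure S := by
  have : {g : Fin N → β | g i ∈ S} = Set.univ.pi fun j => if j = i then S else Set.univ := by
    ext g
    simp only [Set.mem_ofPred_eq, Set.mem_univ_pi]
    exact ⟨fun h j => by split_ifs with hj <;> simp_all, fun h => by simpa using h i⟩
  rw [this, toOuterMeasure_piFin_pi, Finset.prod_eq_single i (fun j _ hj => by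
    simp [hj, (toOuterMeasure_apply_eq_one_iff _ _).2]) (by simp)]
  simp

lemma support_piFin_subset {N : ℕ} (A : Fin N → PMF β) :
    (piFin A).support ⊆ Set.univ.pi fun i => (A i).support := by
  rw [← toOuterMeasure_apply_eq_one_iff, toOuterMeasure_piFin_pi]
  exact Finset.prod_eq_one fun i _ => (toOuterMeasure_apply_eq_one_iff _ _).2 subset_rfl

lemma toOuterMeasure_majority_le (p : PMF α) (b : α → Bool)
    (hp : p.toOuterMeasure {a | b a = true} ≤ 7 / 20) :
    (piFin fun _ : Fin 3 => p).toOuterMeasure {g | majority (b ∘ g) = true} ≤ 1 / 3 := by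
  set E := {a | b a = true}
  have hsub : {g : Fin 3 → α | majority (b ∘ g) = true} ⊆
      Set.univ.pi ![E, E, Set.univ] ∪ Set.univ.pi ![E, Eᶜ, E] ∪ Set.univ.pi ![Eᶜ, E, E] := by
    intro g hg
    simp only [Set.mem_ofPred_eq, majority, Function.comp] at hg
    cases h0 : b (g 0) <;> cases h1 : b (g 1) <;> cases h2 : b (g 2) <;>
      simp_all [E, Fin.forall_fin_succ]
  have huniv : p.toOuterMeasure Set.univ = 1 :=
    (toOuterMeasure_apply_eq_one_iff _ _).2 (Set.subset_univ _)
  refine (MeasureTheory.measure_mono hsub).trans <| (MeasureTheory.measure_union_le _ _).trans <|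
    (add_le_add (MeasureTheory.measure_union_le _ _) le_rfl).trans ?_
  simpa [toOuterMeasure_piFin_pi, Fin.prod_univ_three, toOuterMeasure_compl, huniv]
    using ENNReal.majority_error_le hp

end PMF

namespace Adaptivity

section Views

variable {D R : Type} [DecidableEq D]

lemma view_congr {f g : D → R} {S : Finset D} (h : ∀ d ∈ S, f d = g d) :
    view f S = view g S := by
  funext d
  by_cases hd : d ∈ S <;> simp [view, hd, h]

def fillView [Inhabited R] (v : D → Option R) : D → R := fun d => (v d).getD default

lemma fillView_view [Inhabited R] {f : D → R} {U : Finset D} {d : D} (hd : d ∈ U) :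
    fillView (view f U) d = f d := by
  simp [fillView, view, hd]

end Views

namespace DetAlg

variable {D R O : Type} [DecidableEq D] {k : ℕ}

def queried (T : DetAlg D R O k) (f : D → R) : Finset D := T.seen f (k + 1)

section Basic

variable (T : DetAlg D R O k)

lemma seen_succ (f : D → R) (ℓ : Fin (k + 1)) :
    T.seen f (ℓ + 1) = T.seen f ℓ ∪ T.queries f ℓ := by
  rw [seen, dif_pos ℓ.2]
  rfl

lemma seen_mono (f : D → R) : Monotone (T.seen f) :=
  monotone_nat_of_le_succ fun _ => Finset.subset_union_left

lemma seen_congr {f g : D → R} (ℓ : ℕ) (h : ∀ d ∈ T.seen f ℓ, d ∈ T.seen g ℓ → f d = g d) :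
    T.seen f ℓ = T.seen g ℓ := by
  induction ℓ with
  | zero => rfl
  | succ ℓ ih =>
    have hf := T.seen_mono f ℓ.le_succ
    have hg := T.seen_mono g ℓ.le_succ
    have hℓ := ih fun d hdf hdg => h d (hf hdf) (hg hdg)
    show T.seen f ℓ ∪ _ = T.seen g ℓ ∪ _
    rw [view_congr fun d hd => h d (hf hd) (hg (hℓ ▸ hd)), hℓ]

lemma queries_congr {f g : D → R} (ℓ : Fin (k + 1))
    (h : ∀ d ∈ T.seen f ℓ, d ∈ T.seen g ℓ → f d = g d) : T.queries f ℓ = T.queries g ℓ := by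
  have hℓ := T.seen_congr ℓ h
  rw [queries, queries, view_congr fun d hd => h d hd (hℓ ▸ hd), hℓ]

lemma run_congr {f g : D → R} (h : ∀ d ∈ T.queried f, d ∈ T.queried g → f d = g d) :
    T.run f = T.run g := by
  have hq : T.queried f = T.queried g := T.seen_congr (k + 1) h
  rw [run, run, ← queried, ← queried, view_congr fun d hd => h d hd (hq ▸ hd), hq]

lemma seen_subset_biUnion_queries (f : D → R) (ℓ : ℕ) :
    T.seen f ℓ ⊆ Finset.univ.biUnion (T.queries f) := by
  induction ℓ with
  | zero => exact Finset.empty_subset _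
  | succ ℓ ih =>
    by_cases hℓ : ℓ < k + 1
    · rw [T.seen_succ f ⟨ℓ, hℓ⟩]
      exact Finset.union_subset ih (Finset.subset_biUnion_of_mem _ (Finset.mem_univ _))
    · simpa [seen, hℓ] using ih

lemma card_queried_le_totalQueries (f : D → R) : (T.queried f).card ≤ T.totalQueries f :=
  (Finset.card_le_card (T.seen_subset_biUnion_queries f _)).trans Finset.card_biUnion_le

end Basic

section ZeroRound

variable (S : DetAlg D R O 0)

def querySet : Finset D := S.query 0 fun _ => none

lemma queries_zeroRound (f : D → R) (ℓ : Fin 1) : S.queries f ℓ = S.querySet := by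
  rw [Fin.fin_one_eq_zero ℓ, queries, querySet]
  congr

lemma queried_zeroRound (f : D → R) : S.queried f = S.querySet := by
  rw [← S.queries_zeroRound f 0, ← Finset.empty_union (S.queries f 0)]
  exact S.seen_succ f 0

lemma totalQueries_zeroRound (f : D → R) : S.totalQueries f = S.querySet.card := by
  simp [totalQueries, S.queries_zeroRound f]

lemma run_congr_zeroRound {f g : D → R} (h : ∀ d ∈ S.querySet, f d = g d) :
    S.run f = S.run g :=
  S.run_congr fun d hd _ => h d (S.queried_zeroRound f ▸ hd)

end ZeroRound

def ofTotal [Inhabited R] (Q : Fin (k + 1) → (D → R) → Finset D) (o : (D → R) → O) :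
    DetAlg D R O k where
  query ℓ v := Q ℓ (fillView v)
  out v := o (fillView v)

/-- `P ℓ` is the set of points asked before round `ℓ` by the query rule `Q` on the oracle `f`,
and the query set of round `ℓ` only depends on the values of `f` on `P ℓ`. -/
def IsLocalSchedule (Q : Fin (k + 1) → (D → R) → Finset D) (f : D → R) (P : ℕ → Finset D) :
    Prop :=
  P 0 = ∅ ∧ ∀ ℓ : Fin (k + 1), P (ℓ + 1) = P ℓ ∪ Q ℓ f ∧
    ∀ g : D → R, (∀ d ∈ P ℓ, g d = f d) → Q ℓ g = Q ℓ f

section OfTotal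

variable [Inhabited R] {Q : Fin (k + 1) → (D → R) → Finset D} {o : (D → R) → O} {f : D → R}
  {P : ℕ → Finset D}

lemma seen_ofTotal (hP : IsLocalSchedule Q f P) : ∀ ℓ ≤ k + 1, (ofTotal Q o).seen f ℓ = P ℓ
  | 0, _ => hP.1.symm
  | ℓ + 1, hℓ => by
    have ih := seen_ofTotal hP ℓ (by omega)
    obtain ⟨hsucc, hloc⟩ := hP.2 ⟨ℓ, by omega⟩
    rw [(ofTotal Q o).seen_succ f ⟨ℓ, by omega⟩, hsucc, ih, queries, ih]
    exact congrArg _ (hloc _ fun d hd => fillView_view hd)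

lemma queries_ofTotal (hP : IsLocalSchedule Q f P) (ℓ : Fin (k + 1)) :
    (ofTotal Q o).queries f ℓ = Q ℓ f := by
  rw [queries, seen_ofTotal hP ℓ (by omega)]
  exact (hP.2 ℓ).2 _ fun d hd => fillView_view hd

lemma totalQueries_ofTotal (hP : IsLocalSchedule Q f P) :
    (ofTotal Q o).totalQueries f = ∑ ℓ, (Q ℓ f).card := by
  simp only [totalQueries, queries_ofTotal hP]

lemma run_ofTotal (hP : IsLocalSchedule Q f P)
    (ho : ∀ g : D → R, (∀ d ∈ P (k + 1), g d = f d) → o g = o f) :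
    (ofTotal Q o).run f = o f := by
  rw [run, seen_ofTotal hP (k + 1) le_rfl]
  exact ho _ fun d hd => fillView_view hd

end OfTotal

section Parallel

variable {ι O' : Type} [Fintype ι] (T : ι → DetAlg D R O k)

lemma isLocalSchedule_parallel (f : D → R) :
    IsLocalSchedule (fun ℓ f => Finset.univ.biUnion fun i => (T i).queries f ℓ) f
      fun ℓ => Finset.univ.biUnion fun i => (T i).seen f ℓ := by
  refine ⟨by ext; simp [seen], fun ℓ => ⟨?_, fun g hg => ?_⟩⟩
  · ext d
    simp only [seen_succ, Finset.mem_biUnion, Finset.mem_union, Finset.mem_univ, true_and]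
    exact exists_or
  · refine Finset.biUnion_congr rfl fun i _ => (T i).queries_congr ℓ fun d _ hd => ?_
    exact hg d (Finset.mem_biUnion.2 ⟨i, Finset.mem_univ _, hd⟩)

variable [Inhabited R]

def parallel (g : (ι → O) → O') : DetAlg D R O' k :=
  ofTotal (fun ℓ f => Finset.univ.biUnion fun i => (T i).queries f ℓ)
    fun f => g fun i => (T i).run f

lemma run_parallel (g : (ι → O) → O') (f : D → R) :
    (parallel T g).run f = g fun i => (T i).run f :=
  run_ofTotal (isLocalSchedule_parallel T f) fun _ hf => congrArg g <| funext fun i =>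
    (T i).run_congr fun d _ hd => hf d (Finset.mem_biUnion.2 ⟨i, Finset.mem_univ _, hd⟩)

lemma totalQueries_parallel_le (g : (ι → O) → O') (f : D → R) :
    (parallel T g).totalQueries f ≤ ∑ i, (T i).totalQueries f := by
  rw [parallel, totalQueries_ofTotal (isLocalSchedule_parallel T f)]
  simp only [totalQueries]
  rw [Finset.sum_comm]
  exact Finset.sum_le_sum fun ℓ _ => Finset.card_biUnion_le

end Parallel

section LiftRounds

variable (S : DetAlg D R O 0)

lemma isLocalSchedule_liftRounds (f : D → R) :
    IsLocalSchedule (k := k) (fun ℓ _ => if ℓ = 0 then S.querySet else ∅) f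
      fun ℓ => if ℓ = 0 then ∅ else S.querySet := by
  refine ⟨rfl, fun ℓ => ⟨?_, fun _ _ => rfl⟩⟩
  rcases eq_or_ne ℓ 0 with rfl | hℓ
  · simp
  · simp [hℓ, Fin.val_ne_zero_iff.mpr hℓ]

variable [Inhabited R]

def liftRounds (k : ℕ) : DetAlg D R O k :=
  ofTotal (fun ℓ _ => if ℓ = 0 then S.querySet else ∅) S.run

lemma run_liftRounds (f : D → R) : (S.liftRounds k).run f = S.run f :=
  run_ofTotal (S.isLocalSchedule_liftRounds f) fun _ hg =>
    S.run_congr_zeroRound fun d hd => hg d (by simpa using hd)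

lemma totalQueries_liftRounds (f : D → R) :
    (S.liftRounds k).totalQueries f = S.totalQueries f := by
  rw [liftRounds, totalQueries_ofTotal (S.isLocalSchedule_liftRounds f), totalQueries_zeroRound]
  simp [apply_ite Finset.card]

end LiftRounds

end DetAlg

end Adaptivity

namespace Adaptivity.DetAlg

section LocalDecoding

variable {D E A R : Type} [DecidableEq E] (L : D → DetAlg E A (Option R) 0)

/-- `none` is the decoder's answer `⊥`. -/
def localDecode (w : E → A) : D → Option R := fun d => (L d).run w

def decodedMessage [Inhabited R] (w : E → A) : D → R := fillView (localDecode L w)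

lemma decodedMessage_congr [Inhabited R] {U : Finset D} {w w' : E → A}
    (h : ∀ e ∈ U.biUnion fun d => (L d).querySet, w' e = w e) {d : D} (hd : d ∈ U) :
    localDecode L w' d = localDecode L w d ∧ decodedMessage L w' d = decodedMessage L w d := by
  have : localDecode L w' d = localDecode L w d :=
    (L d).run_congr_zeroRound fun e he => h e (Finset.mem_biUnion.2 ⟨d, hd, he⟩)
  simp [decodedMessage, fillView, this]

end LocalDecoding

section Simulate

variable {D E A R : Type} [DecidableEq D] [DecidableEq E] [Inhabited R] {k : ℕ}

def simulatedOutput (T : DetAlg D R Bool k) (L : D → DetAlg E A (Option R) 0) (w : E → A) :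
    Bool :=
  decide (∀ d ∈ T.queried (decodedMessage L w), (localDecode L w d).isSome) &&
    T.run (decodedMessage L w)

/-- The decision tree `T` run on the message decoded locally by `L`; a `⊥` on a coordinate it
asks makes it reject. -/
def simulate [Inhabited A] (T : DetAlg D R Bool k) (L : D → DetAlg E A (Option R) 0) :
    DetAlg E A Bool k :=
  ofTotal (fun ℓ w => (T.queries (decodedMessage L w) ℓ).biUnion fun d => (L d).querySet)
    (simulatedOutput T L)

variable (T : DetAlg D R Bool k) (L : D → DetAlg E A (Option R) 0)

lemma isLocalSchedule_simulate (w : E → A) :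
    IsLocalSchedule
      (fun ℓ w => (T.queries (decodedMessage L w) ℓ).biUnion fun d => (L d).querySet) w
      fun ℓ => (T.seen (decodedMessage L w) ℓ).biUnion fun d => (L d).querySet := by
  refine ⟨by simp [seen], fun ℓ => ⟨?_, fun w' hw' => ?_⟩⟩
  · simp only [seen_succ, Finset.union_biUnion]
  · exact congrArg (Finset.biUnion · _)
      (T.queries_congr ℓ fun d _ hd => (decodedMessage_congr L hw' hd).2)

variable [Inhabited A]

lemma run_simulate (w : E → A) : (T.simulate L).run w = simulatedOutput T L w := by
  refine run_ofTotal (T.isLocalSchedule_simulate L w) fun w' hw' => ?_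
  have hdec := fun d hd => decodedMessage_congr L (d := d) hw' hd
  have hq : T.queried (decodedMessage L w') = T.queried (decodedMessage L w) :=
    T.seen_congr (k + 1) fun d _ hd => (hdec d hd).2
  rw [simulatedOutput, simulatedOutput, T.run_congr fun d _ hd => (hdec d hd).2, hq]
  congr 2
  exact propext (forall₂_congr fun d hd => by rw [(hdec d hd).1])

lemma run_simulate_of_localDecode {w : E → A} {x : D → R}
    (h : ∀ d, localDecode L w d = some (x d)) : (T.simulate L).run w = T.run x := by
  have hx : decodedMessage L w = x := funext fun d => by simp [decodedMessage, fillView, h]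
  simp [run_simulate, simulatedOutput, hx, h]

lemma run_eq_true_of_run_simulate {w : E → A} {x : D → R}
    (h : ∀ d ∈ T.queried x, localDecode L w d = some (x d) ∨ localDecode L w d = none)
    (hrun : (T.simulate L).run w = true) : T.run x = true := by
  rw [run_simulate, simulatedOutput, Bool.and_eq_true, decide_eq_true_iff] at hrun
  obtain ⟨hsome, hacc⟩ := hrun
  rw [← hacc]
  refine T.run_congr fun d hd hd' => ?_
  obtain ⟨a, ha⟩ := Option.isSome_iff_exists.1 (hsome d hd')
  rcases h d hd with hx | hx <;> simp_all [decodedMessage, fillView]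

lemma totalQueries_simulate_le {c : ℕ} (hL : ∀ d, (L d).querySet.card ≤ c) (w : E → A) :
    (T.simulate L).totalQueries w ≤ T.totalQueries (decodedMessage L w) * c := by
  rw [simulate, totalQueries_ofTotal (T.isLocalSchedule_simulate L w), totalQueries,
    Finset.sum_mul]
  exact Finset.sum_le_sum fun ℓ _ => Finset.card_biUnion_le.trans
    (by simpa using Finset.sum_le_sum fun d _ => hL d)

end Simulate

end Adaptivity.DetAlg

namespace Adaptivity

section Randomized

variable {D R O : Type} [DecidableEq D] {k : ℕ}

lemma probOut_map {α : Type} (A : PMF α) (F : α → DetAlg D R O k) (f : D → R) (P : O → Prop) :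
    probOut (A.map F) f P = A.toOuterMeasure {a | P ((F a).run f)} :=
  PMF.toOuterMeasure_map_apply _ _ _

lemma probOut_false (A : PMF (DetAlg D R Bool k)) (f : D → R) :
    probOut A f (· = false) = 1 - probOut A f (· = true) := by
  rw [probOut, probOut, ← PMF.toOuterMeasure_compl]
  congr
  ext T
  simp

lemma probOut_true (A : PMF (DetAlg D R Bool k)) (f : D → R) :
    probOut A f (· = true) = 1 - probOut A f (· = false) := by
  rw [probOut, probOut, ← PMF.toOuterMeasure_compl]
  congr
  ext T
  simp

lemma probOut_false_le_one_third {A : PMF (DetAlg D R Bool k)} {f : D → R}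
    (h : 2 / 3 ≤ probOut A f (· = true)) : probOut A f (· = false) ≤ 1 / 3 :=
  probOut_false A f ▸ ENNReal.one_sub_le_one_third h

lemma probOut_true_le_one_third {A : PMF (DetAlg D R Bool k)} {f : D → R}
    (h : 2 / 3 ≤ probOut A f (· = false)) : probOut A f (· = true) ≤ 1 / 3 :=
  probOut_true A f ▸ ENNReal.one_sub_le_one_third h

lemma probOut_true_eq_one_of_false_le {D' R' : Type} [DecidableEq D'] {k' : ℕ}
    {A : PMF (DetAlg D R Bool k)} {B : PMF (DetAlg D' R' Bool k')} {f : D → R} {g : D' → R'}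
    (h : probOut A f (· = false) ≤ probOut B g (· = false)) (hB : probOut B g (· = true) = 1) :
    probOut A f (· = true) = 1 := by
  rw [probOut_false B, hB, tsub_self, nonpos_iff_eq_zero] at h
  rw [probOut_true, h, tsub_zero]

lemma querySet_card_le {S : PMF (DetAlg D R O 0)} {q : ℕ} (hS : queryBound S q) (f : D → R)
    {T : DetAlg D R O 0} (hT : T ∈ S.support) : T.querySet.card ≤ q := by
  have := hS T hT f
  rw [DetAlg.totalQueries_zeroRound] at this
  exact_mod_cast this

variable [Inhabited R]

noncomputable def parallelDist {N : ℕ} {O' : Type} (A : Fin N → PMF (DetAlg D R O k))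
    (g : (Fin N → O) → O') : PMF (DetAlg D R O' k) :=
  (PMF.piFin A).map fun T => DetAlg.parallel T g

section Parallel

variable {N : ℕ} {O' : Type} (A : Fin N → PMF (DetAlg D R O k)) (g : (Fin N → O) → O')

lemma probOut_parallelDist (f : D → R) (P : O' → Prop) :
    probOut (parallelDist A g) f P =
      (PMF.piFin A).toOuterMeasure {T | P (g fun i => (T i).run f)} := by
  rw [parallelDist, probOut_map]
  simp only [DetAlg.run_parallel]

lemma queryBound_parallelDist {q : Fin N → ℝ} (hA : ∀ i, queryBound (A i) (q i)) :
    queryBound (parallelDist A g) (∑ i, q i) := by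
  intro P hP f
  obtain ⟨T, hT, rfl⟩ := (PMF.support_map _ _ ▸ hP : P ∈ _ '' _)
  have hT' := PMF.support_piFin_subset A hT
  calc ((DetAlg.parallel T g).totalQueries f : ℝ) ≤ ∑ i, ((T i).totalQueries f : ℝ) := by
        exact_mod_cast DetAlg.totalQueries_parallel_le T g f
    _ ≤ ∑ i, q i := Finset.sum_le_sum fun i _ => hA i (T i) (hT' i trivial) f

end Parallel

def allTrue {N : ℕ} (o : Fin N → Bool) : Bool := decide (∀ i, o i = true)

lemma probOut_parallelDist_allTrue {N : ℕ} (A : Fin N → PMF (DetAlg D R Bool k)) (f : D → R) :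
    probOut (parallelDist A allTrue) f (· = true) = ∏ i, probOut (A i) f (· = true) := by
  rw [probOut_parallelDist]
  simp only [probOut, ← PMF.toOuterMeasure_piFin_pi]
  congr
  ext T
  simp [allTrue]

noncomputable def majorityDist (B : PMF (DetAlg D R Bool k)) : PMF (DetAlg D R Bool k) :=
  parallelDist (fun _ : Fin 3 => B) majority

section Majority

variable (B : PMF (DetAlg D R Bool k)) (f : D → R)

lemma probOut_majorityDist_true_le (h : probOut B f (· = true) ≤ 7 / 20) :
    probOut (majorityDist B) f (· = true) ≤ 1 / 3 := by
  rw [majorityDist, probOut_parallelDist]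
  exact PMF.toOuterMeasure_majority_le B (fun T => T.run f) h

lemma probOut_majorityDist_false_le (h : probOut B f (· = false) ≤ 7 / 20) :
    probOut (majorityDist B) f (· = false) ≤ 1 / 3 := by
  rw [majorityDist, probOut_parallelDist]
  have := PMF.toOuterMeasure_majority_le B (fun T => !T.run f) (by simpa [probOut] using h)
  convert this using 2
  ext T
  simp [Function.comp_def, majority_not]

lemma probOut_majorityDist_eq_one (h : probOut B f (· = true) = 1) :
    probOut (majorityDist B) f (· = true) = 1 := by
  rw [majorityDist, probOut_parallelDist, PMF.toOuterMeasure_apply_eq_one_iff]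
  intro T hT
  have hacc i : (T i).run f = true :=
    (PMF.toOuterMeasure_apply_eq_one_iff _ _).1 h (PMF.support_piFin_subset _ hT i trivial)
  simp [majority, hacc]

end Majority

end Randomized

section Decoders

variable {E A R : Type} [DecidableEq E] [Inhabited A] [DecidableEq R]

def unanimous {N : ℕ} (o : Fin (N + 1) → Option R) : Option R :=
  if ∀ j, o j = o 0 then o 0 else none

lemma unanimous_of_forall_eq {N : ℕ} {o : Fin (N + 1) → Option R} {a : Option R}
    (h : ∀ j, o j = a) : unanimous o = a := by
  simp [unanimous, h]

lemma eq_some_of_unanimous_eq_some {N : ℕ} {o : Fin (N + 1) → Option R} {a : R}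
    (h : unanimous o = some a) (j : Fin (N + 1)) : o j = some a := by
  unfold unanimous at h
  split_ifs at h with hall
  exact (hall j).trans h

noncomputable def unanimousDecoder (Dec : PMF (DetAlg E A (Option R) 0)) (r : ℕ) :
    PMF (DetAlg E A (Option R) 0) :=
  parallelDist (fun _ : Fin (r + 1) => Dec) unanimous

section Unanimous

variable (Dec : PMF (DetAlg E A (Option R) 0)) (r : ℕ)

lemma queryBound_unanimousDecoder {qD : ℝ} (h : queryBound Dec qD) :
    queryBound (unanimousDecoder Dec r) ((r + 1) * qD) := by
  simpa [unanimousDecoder] using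
    queryBound_parallelDist (fun _ : Fin (r + 1) => Dec) unanimous fun _ => h

lemma probOut_unanimousDecoder_wrong_le (w : E → A) (a : R) :
    probOut (unanimousDecoder Dec r) w (fun o => ¬(o = some a ∨ o = none)) ≤
      probOut Dec w (fun o => ¬(o = some a ∨ o = none)) ^ (r + 1) := by
  rw [unanimousDecoder, probOut_parallelDist]
  calc _ ≤ (PMF.piFin fun _ : Fin (r + 1) => Dec).toOuterMeasure
        (Set.univ.pi fun _ => {S | ¬(S.run w = some a ∨ S.run w = none)}) := by
        refine MeasureTheory.measure_mono fun T hT j _ => ?_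
        obtain ⟨b, hb⟩ := Option.ne_none_iff_exists'.1 (not_or.1 hT).2
        simp only [Set.mem_ofPred_eq, eq_some_of_unanimous_eq_some hb j]
        simp_all
    _ = _ := by simp [PMF.toOuterMeasure_piFin_pi, probOut]

lemma run_eq_of_mem_support_unanimousDecoder {w : E → A} {a : Option R}
    (h : ∀ S ∈ Dec.support, S.run w = a) {U : DetAlg E A (Option R) 0}
    (hU : U ∈ (unanimousDecoder Dec r).support) : U.run w = a := by
  obtain ⟨T, hT, rfl⟩ := (PMF.support_map _ _ ▸ hU : U ∈ _ '' _)
  rw [DetAlg.run_parallel]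
  exact unanimous_of_forall_eq fun j => h _ (PMF.support_piFin_subset _ hT j trivial)

end Unanimous

noncomputable def decoderFamily {N : ℕ} (Dec : Fin N → PMF (DetAlg E A (Option R) 0)) (r : ℕ) :
    PMF (Fin N → DetAlg E A (Option R) 0) :=
  PMF.piFin fun i => unanimousDecoder (Dec i) r

variable {N : ℕ} (Dec : Fin N → PMF (DetAlg E A (Option R) 0)) (r : ℕ)

lemma querySet_card_le_of_mem_decoderFamily {qD : ℕ} (h : ∀ i, queryBound (Dec i) qD)
    {L : Fin N → DetAlg E A (Option R) 0} (hL : L ∈ (decoderFamily Dec r).support) (i : Fin N) :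
    (L i).querySet.card ≤ (r + 1) * qD :=
  querySet_card_le (by exact_mod_cast queryBound_unanimousDecoder (Dec i) r (h i)) default
    (PMF.support_piFin_subset _ hL i trivial)

lemma localDecode_of_mem_decoderFamily {w : E → A} {x : Fin N → R}
    (h : ∀ i, probOut (Dec i) w (· = some (x i)) = 1)
    {L : Fin N → DetAlg E A (Option R) 0} (hL : L ∈ (decoderFamily Dec r).support) (i : Fin N) :
    DetAlg.localDecode L w i = some (x i) :=
  run_eq_of_mem_support_unanimousDecoder (Dec i) r
    (fun _ hS => (PMF.toOuterMeasure_apply_eq_one_iff _ _).1 (h i) hS)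
    (PMF.support_piFin_subset _ hL i trivial)

lemma toOuterMeasure_decoderFamily_wrong_le {w : E → A} {x : Fin N → R}
    (h : ∀ i, 2 / 3 ≤ probOut (Dec i) w fun o => o = some (x i) ∨ o = none) (i : Fin N) :
    (decoderFamily Dec r).toOuterMeasure
      {L | ¬(DetAlg.localDecode L w i = some (x i) ∨ DetAlg.localDecode L w i = none)} ≤
      (1 / 3) ^ (r + 1) := by
  refine (PMF.toOuterMeasure_piFin_eval (fun i => unanimousDecoder (Dec i) r) i
    {S | ¬(S.run w = some (x i) ∨ S.run w = none)}).le.trans <|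
    (probOut_unanimousDecoder_wrong_le (Dec i) r w (x i)).trans (pow_le_pow_left' ?_ _)
  rw [probOut, ← Set.compl_ofPred, PMF.toOuterMeasure_compl]
  exact ENNReal.one_sub_le_one_third (h i)

end Decoders

section Simulation

variable {D E A R : Type} [DecidableEq D] [DecidableEq E] [Inhabited A] [Inhabited R] {k : ℕ}

noncomputable def simulateDist (DT : PMF (DetAlg D R Bool k))
    (Ldist : PMF (D → DetAlg E A (Option R) 0)) : PMF (DetAlg E A Bool k) :=
  DT.bind fun T => Ldist.map T.simulate

variable (DT : PMF (DetAlg D R Bool k)) (Ldist : PMF (D → DetAlg E A (Option R) 0))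

lemma queryBound_simulateDist {q c : ℕ} (hDT : queryBound DT q)
    (hL : ∀ L ∈ Ldist.support, ∀ d, (L d).querySet.card ≤ c) :
    queryBound (simulateDist DT Ldist) (q * c) := by
  intro S hS w
  obtain ⟨T, hT, L, hL', rfl⟩ : ∃ T ∈ DT.support, ∃ L ∈ Ldist.support, T.simulate L = S := by
    simpa [simulateDist, PMF.mem_support_bind_iff] using hS
  have hq : T.totalQueries (DetAlg.decodedMessage L w) ≤ q := by
    exact_mod_cast hDT T hT _
  exact_mod_cast (T.totalQueries_simulate_le L (hL L hL') w).trans (Nat.mul_le_mul_right c hq)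

lemma probOut_simulateDist_le_of_localDecode {w : E → A} {x : D → R}
    (hL : ∀ L ∈ Ldist.support, ∀ d, DetAlg.localDecode L w d = some (x d)) (b : Bool) :
    probOut (simulateDist DT Ldist) w (· = b) ≤ probOut DT x (· = b) := by
  have := PMF.toOuterMeasure_bind_le DT (fun T => Ldist.map T.simulate)
    (s := {S | S.run w = b}) (t := {T | T.run x = b}) (c := 0) fun T _ => by
    by_cases hT : T.run x = b
    · simpa [hT] using PMF.toOuterMeasure_le_one _ _
    · rw [PMF.toOuterMeasure_map_apply]
      refine (PMF.toOuterMeasure_mono _ (t := ∅) fun L ⟨hL₁, hL₂⟩ => ?_).trans (by simp)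
      exact hT ((T.run_simulate_of_localDecode L (hL L hL₂)).symm.trans hL₁)
  simpa [simulateDist, probOut] using this

lemma probOut_simulateDist_true_le {w : E → A} {x : D → R} {q : ℕ} (hDT : queryBound DT q)
    {ε : ℝ≥0∞} (hbad : ∀ d, Ldist.toOuterMeasure
      {L | ¬(DetAlg.localDecode L w d = some (x d) ∨ DetAlg.localDecode L w d = none)} ≤ ε) :
    probOut (simulateDist DT Ldist) w (· = true) ≤ probOut DT x (· = true) + q * ε := by
  refine PMF.toOuterMeasure_bind_le DT _ fun T hT => ?_
  by_cases hT' : T.run x = true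
  · exact (PMF.toOuterMeasure_le_one _ _).trans (by simp [hT'])
  rw [PMF.toOuterMeasure_map_apply]
  have hsub : T.simulate ⁻¹' {S | S.run w = true} ⊆ ⋃ d ∈ T.queried x,
      {L | ¬(DetAlg.localDecode L w d = some (x d) ∨ DetAlg.localDecode L w d = none)} := by
    intro L hL
    by_contra hgood
    simp only [Set.mem_iUnion, not_exists, Set.mem_ofPred_eq, not_not] at hgood
    exact hT' (T.run_eq_true_of_run_simulate L hgood hL)
  have hcard : ((T.queried x).card : ℝ≥0∞) ≤ q := by
    exact_mod_cast (T.card_queried_le_totalQueries x).trans (by exact_mod_cast hDT T hT x)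
  calc _ ≤ ∑ d ∈ T.queried x, Ldist.toOuterMeasure
        {L | ¬(DetAlg.localDecode L w d = some (x d) ∨ DetAlg.localDecode L w d = none)} :=
        (MeasureTheory.measure_mono hsub).trans (MeasureTheory.measure_biUnion_finset_le _ _)
    _ ≤ (T.queried x).card * ε := by simpa using Finset.sum_le_sum fun d _ => hbad d
    _ ≤ _ := by simpa [hT'] using by gcongr

end Simulation

section DecoderFamily

variable {N : ℕ} {E A R : Type} [DecidableEq E] [Inhabited A] [DecidableEq R] [Inhabited R]
  {k : ℕ} (DT : PMF (DetAlg (Fin N) R Bool k)) (Dec : Fin N → PMF (DetAlg E A (Option R) 0))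
  (r : ℕ)

lemma queryBound_simulateDist_decoderFamily {q qD : ℕ} (hDT : queryBound DT q)
    (hDec : ∀ i, queryBound (Dec i) qD) :
    queryBound (simulateDist DT (decoderFamily Dec r)) ((q * ((r + 1) * qD) : ℕ) : ℝ) := by
  exact_mod_cast queryBound_simulateDist DT _ hDT fun _ hL =>
    querySet_card_le_of_mem_decoderFamily Dec r hDec hL

lemma probOut_simulateDist_decoderFamily_le_of_perfect {w : E → A} {x : Fin N → R}
    (h : ∀ i, probOut (Dec i) w (· = some (x i)) = 1) (b : Bool) :
    probOut (simulateDist DT (decoderFamily Dec r)) w (· = b) ≤ probOut DT x (· = b) :=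
  probOut_simulateDist_le_of_localDecode DT _
    (fun _ hL => localDecode_of_mem_decoderFamily Dec r h hL) b

/-- Each simulation errs with probability at most `1/3` (the tree) plus `1/60` (the decoders). -/
lemma probOut_simulateDist_decoderFamily_le {q : ℕ} (hDT : queryBound DT q) {w : E → A}
    {x : Fin N → R} (hx : 2 / 3 ≤ probOut DT x (· = false))
    (hdec : ∀ i, 2 / 3 ≤ probOut (Dec i) w fun o => o = some (x i) ∨ o = none) :
    probOut (simulateDist DT (decoderFamily Dec (Nat.log 2 q + 6))) w (· = true) ≤ 7 / 20 := by
  refine (probOut_simulateDist_true_le DT _ hDT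
    (toOuterMeasure_decoderFamily_wrong_le Dec _ hdec)).trans
    ((add_le_add ?_ le_rfl).trans (ENNReal.one_third_add_mul_pow_le q))
  exact probOut_true_le_one_third hx

end DecoderFamily

section Combined

variable {E A : Type} [DecidableEq E] [Inhabited A] {k : ℕ}

noncomputable def combinedTester (Tst : PMF (DetAlg E A Bool 0)) (M : ℕ)
    (Sim : PMF (DetAlg E A Bool k)) : PMF (DetAlg E A Bool k) :=
  parallelDist (Fin.cons (majorityDist Sim) fun _ : Fin M => Tst.map (DetAlg.liftRounds · k))
    allTrue

variable (Tst : PMF (DetAlg E A Bool 0)) (M : ℕ) (Sim : PMF (DetAlg E A Bool k)) (w : E → A)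

lemma probOut_combinedTester :
    probOut (combinedTester Tst M Sim) w (· = true) =
      probOut (majorityDist Sim) w (· = true) * probOut Tst w (· = true) ^ M := by
  rw [combinedTester, probOut_parallelDist_allTrue, Fin.prod_univ_succ]
  simp [DetAlg.run_liftRounds, probOut]

lemma queryBound_combinedTester {qT qS : ℝ} (hT : queryBound Tst qT) (hS : queryBound Sim qS) :
    queryBound (combinedTester Tst M Sim) (3 * qS + M * qT) := by
  have hmaj : queryBound (majorityDist Sim) (3 * qS) := by
    simpa [majorityDist] using queryBound_parallelDist (fun _ : Fin 3 => Sim) majority fun _ => hS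
  have hlift : queryBound (Tst.map (DetAlg.liftRounds · k)) qT := by
    intro S hS f
    obtain ⟨T, hT', rfl⟩ := (PMF.support_map _ _ ▸ hS : S ∈ _ '' _)
    simpa [DetAlg.totalQueries_liftRounds] using hT T hT' f
  simpa [combinedTester, Fin.sum_univ_succ] using queryBound_parallelDist _ allTrue
    (q := Fin.cons (3 * qS) fun _ : Fin M => qT) (Fin.cases hmaj fun _ => hlift)

lemma combinedTester_complete (hT : probOut Tst w (· = true) = 1)
    (hS : probOut Sim w (· = false) ≤ 1 / 3) :
    2 / 3 ≤ probOut (combinedTester Tst M Sim) w (· = true) := by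
  rw [probOut_combinedTester, hT, one_pow, mul_one, probOut_true]
  exact ENNReal.two_thirds_le_one_sub
    (probOut_majorityDist_false_le Sim w (hS.trans ENNReal.one_third_le_seven_twentieths))

lemma combinedTester_oneSided (hT : probOut Tst w (· = true) = 1)
    (hS : probOut Sim w (· = true) = 1) : probOut (combinedTester Tst M Sim) w (· = true) = 1 := by
  rw [probOut_combinedTester, hT, probOut_majorityDist_eq_one Sim w hS, one_pow, mul_one]

lemma combinedTester_sound_of_tester (hT : probOut Tst w (· = true) ^ M ≤ 1 / 3) :
    2 / 3 ≤ probOut (combinedTester Tst M Sim) w (· = false) := by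
  rw [probOut_false, probOut_combinedTester]
  exact ENNReal.two_thirds_le_one_sub
    ((mul_le_of_le_one_left' (PMF.toOuterMeasure_le_one _ _)).trans hT)

lemma combinedTester_sound_of_sim (hS : probOut Sim w (· = true) ≤ 7 / 20) :
    2 / 3 ≤ probOut (combinedTester Tst M Sim) w (· = false) := by
  rw [probOut_false, probOut_combinedTester]
  refine ENNReal.two_thirds_le_one_sub ((mul_le_of_le_one_right' ?_).trans
    (probOut_majorityDist_true_le Sim w hS))
  exact pow_le_one₀ bot_le (PMF.toOuterMeasure_le_one _ _)

end Combined

section Distance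

variable {D R : Type} [Fintype D]

lemma hamDist_self (f : D → R) : hamDist f f = 0 := by
  simp [hamDist]

lemma distToProp_le_hamDist {f g : D → R} {P : Set (D → R)} (hg : g ∈ P) :
    distToProp f P ≤ hamDist f g :=
  csInf_le ⟨0, by rintro _ ⟨h, _, rfl⟩; exact div_nonneg (Nat.cast_nonneg _) (Nat.cast_nonneg _)⟩
    ⟨g, hg, rfl⟩

lemma le_distToProp {f : D → R} {P : Set (D → R)} (hP : P.Nonempty) {μ : ℝ}
    (h : ∀ g ∈ P, μ ≤ hamDist f g) : μ ≤ distToProp f P :=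
  le_csInf (hP.image _) (by rintro _ ⟨g, hg, rfl⟩; exact h g hg)

end Distance

lemma pow_probOut_true_le_of_far {E A : Type} [DecidableEq E] [Fintype E] {Code : Set (E → A)}
    (hne : Code.Nonempty) (Tst : PMF (DetAlg E A Bool 0)) {a₁ c₁ : ℝ} (ha₁ : 0 ≤ a₁)
    (hc₁ : 0 ≤ c₁)
    (hrej : ∀ w ∉ Code, ENNReal.ofReal (a₁ * distToProp w Code ^ c₁) ≤ probOut Tst w (· = false))
    {w : E → A} {μ : ℝ} (hμ : 0 < μ) (hfar : ∀ g ∈ Code, μ ≤ hamDist w g) {M : ℕ}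
    (hM : 2 ≤ a₁ * μ ^ c₁ * M) : probOut Tst w (· = true) ^ M ≤ 1 / 3 := by
  have hw : w ∉ Code := fun hw => by linarith [hfar w hw, hamDist_self w]
  have hs : a₁ * μ ^ c₁ ≤ a₁ * distToProp w Code ^ c₁ :=
    mul_le_mul_of_nonneg_left (Real.rpow_le_rpow hμ.le (le_distToProp hne hfar) hc₁) ha₁
  rw [probOut_true]
  exact (pow_le_pow_left' (tsub_le_tsub_left ((ENNReal.ofReal_le_ofReal hs).trans (hrej w hw)) 1)
    M).trans (ENNReal.one_sub_ofReal_pow_le_one_third hM)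

lemma two_le_mul_two_mul_ceil {s : ℝ} (hs : 0 < s) : 2 ≤ s * ((2 * ⌈1 / s⌉₊ : ℕ) : ℝ) := by
  have := Nat.le_ceil (1 / s)
  push_cast
  nlinarith [mul_one_div_cancel hs.ne']

/-- `3 (log₂ q + 7) ≤ 12 (log₂ q + 2)` and `2 ≤ 12`. -/
lemma queryCount_le (qT qD q : ℕ) (x : ℝ) :
    3 * ((q * ((Nat.log 2 q + 6 + 1) * qD) : ℕ) : ℝ) + ((2 * ⌈x⌉₊ : ℕ) : ℝ) * qT ≤
      12 * (qT + qD + 1) * q * (Real.logb 2 q + 2) + 12 * (qT + qD + 1) * (⌈x⌉₊ : ℝ) := by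
  have hlog : (Nat.log 2 q : ℝ) ≤ Real.logb 2 q := by exact_mod_cast Real.natLog_le_logb q 2
  have hlog0 : (0 : ℝ) ≤ Real.logb 2 q := (Nat.cast_nonneg _).trans hlog
  have hq := (Nat.cast_nonneg q : (0 : ℝ) ≤ q)
  have hc := (Nat.cast_nonneg ⌈x⌉₊ : (0 : ℝ) ≤ ⌈x⌉₊)
  push_cast
  nlinarith [mul_nonneg hq (Nat.cast_nonneg qD : (0 : ℝ) ≤ qD),
    mul_nonneg hq (Nat.cast_nonneg qT : (0 : ℝ) ≤ qT),
    mul_nonneg hc (Nat.cast_nonneg qT : (0 : ℝ) ≤ qT),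
    mul_nonneg hc (Nat.cast_nonneg qD : (0 : ℝ) ≤ qD)]

end Adaptivity
open Adaptivity in
/-- PT ⇝ DT reduction. Given a linear code `C : 𝔽_n^n → 𝔽_n^m` with
relative distance `δC` that is a strong LTC (with `q_T` non-adaptive queries, rejection
probability `≥ a₁·dist(w,𝒞)^{c₁}`) and a relaxed LDC (with `q_D` non-adaptive queries,
decoding radius `δ_r < δC/2`), there is a constant `A` depending only on `q_T, q_D`
such that any `f` computable by a randomized `(k,q)`-round-adaptive decision tree
yields, for every `ε ∈ (0,1]`, a `(k, A·q·(log₂ q + 2) + A·⌈1/(a₁·min(δ_r,ε)^{c₁})⌉)`-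
round-adaptive `ε`-tester for `C_f = {C(x) : f(x) = 1}`; moreover if the decision tree
is always correct then the tester is one-sided. -/
theorem tester_of_dt (qT qD : ℕ) :
    ∃ A : ℝ, 0 < A ∧
    ∀ (n m : ℕ), n.Prime →
    ∀ C : (Fin n → ZMod n) →ₗ[ZMod n] (Fin m → ZMod n), Function.Injective C →
    ∀ δC : ℝ, 0 < δC → δC ≤ 1 →
    (∀ x x' : Fin n → ZMod n, x ≠ x' → δC ≤ hamDist (C x) (C x')) →
    ∀ (Tst : PMF (DetAlg (Fin m) (ZMod n) Bool 0)) (a₁ c₁ : ℝ), 0 < a₁ → 1 ≤ c₁ →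
    queryBound Tst (qT : ℝ) →
    (∀ w : Fin m → ZMod n, w ∈ Set.range (fun x => C x) →
      probOut Tst w (· = true) = 1) →
    (∀ w : Fin m → ZMod n, w ∉ Set.range (fun x => C x) →
      ENNReal.ofReal (a₁ * distToProp w (Set.range (fun x => C x)) ^ c₁) ≤
        probOut Tst w (· = false)) →
    ∀ (Dec : Fin n → PMF (DetAlg (Fin m) (ZMod n) (Option (ZMod n)) 0)) (δr : ℝ),
    0 < δr → δr < δC / 2 →
    (∀ i : Fin n, queryBound (Dec i) (qD : ℝ)) →
    (∀ (x : Fin n → ZMod n) (i : Fin n), probOut (Dec i) (C x) (· = some (x i)) = 1) →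
    (∀ (w : Fin m → ZMod n) (x : Fin n → ZMod n) (i : Fin n),
      hamDist w (C x) ≤ δr →
      (2 : ℝ≥0∞) / 3 ≤ probOut (Dec i) w (fun o => o = some (x i) ∨ o = none)) →
    ∀ f : (Fin n → ZMod n) → Bool, (∃ x, f x = true) →
    ∀ (k q : ℕ) (DT : PMF (DetAlg (Fin n) (ZMod n) Bool k)),
    queryBound DT (q : ℝ) →
    (∀ x : Fin n → ZMod n, (2 : ℝ≥0∞) / 3 ≤ probOut DT x (· = f x)) →
    ∀ ε : ℝ, 0 < ε → ε ≤ 1 →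
      ∃ q' : ℝ,
        q' ≤ A * q * (Real.logb 2 q + 2) +
          A * (⌈1 / (a₁ * (min δr ε) ^ c₁)⌉₊ : ℝ) ∧
        ∃ Test : PMF (DetAlg (Fin m) (ZMod n) Bool k),
          IsTester q' ε {w : Fin m → ZMod n | ∃ x, f x = true ∧ C x = w} Test ∧
          ((∀ x : Fin n → ZMod n, probOut DT x (· = f x) = 1) →
            OneSidedTester {w : Fin m → ZMod n | ∃ x, f x = true ∧ C x = w} Test) := by
  refine ⟨12 * (qT + qD + 1), by positivity, ?_⟩
  intro n m _ C _ δC _ _ _ Tst a₁ c₁ ha₁ hc₁ hTstQ hTstC hTstS Dec δr hδr _ hDecQ hDecC hDecS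
    f _ k q DT hDTQ hDT ε hε _
  set μ := min δr ε
  set M := 2 * ⌈1 / (a₁ * μ ^ c₁)⌉₊
  set Sim := simulateDist DT (decoderFamily Dec (Nat.log 2 q + 6))
  have hSimC x :=
    probOut_simulateDist_decoderFamily_le_of_perfect DT Dec (Nat.log 2 q + 6) (hDecC x)
  refine ⟨_, queryCount_le qT qD q _, combinedTester Tst M Sim, ⟨queryBound_combinedTester Tst
    M Sim hTstQ (queryBound_simulateDist_decoderFamily DT Dec _ hDTQ hDecQ), ?_, fun w hw => ?_⟩,
    fun hDT1 => ?_⟩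
  · rintro _ ⟨x, hfx, rfl⟩
    exact combinedTester_complete Tst M Sim _ (hTstC _ ⟨x, rfl⟩)
      ((hSimC x false).trans (probOut_false_le_one_third (by simpa [hfx] using hDT x)))
  · by_cases hnear : ∃ x, hamDist w (C x) < μ
    · obtain ⟨x, hx⟩ := hnear
      have hfx : f x = false := by
        by_contra hfx
        have := distToProp_le_hamDist (f := w) (P := {w | ∃ x, f x = true ∧ C x = w})
          ⟨x, Bool.not_eq_false _ ▸ hfx, rfl⟩
        linarith [min_le_right δr ε]
      exact combinedTester_sound_of_sim Tst M Sim w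
        (probOut_simulateDist_decoderFamily_le DT Dec hDTQ (by simpa [hfx] using hDT x)
          fun i => hDecS w x i (hx.le.trans (min_le_left _ _)))
    · simp only [not_exists, not_lt] at hnear
      have hμ : 0 < μ := lt_min hδr hε
      exact combinedTester_sound_of_tester Tst M Sim w
        (pow_probOut_true_le_of_far (Set.range_nonempty _) Tst ha₁.le (by linarith) hTstS hμ
          (by rintro _ ⟨x, rfl⟩; exact hnear x)
          (two_le_mul_two_mul_ceil (mul_pos ha₁ (Real.rpow_pos_of_pos hμ c₁))))
  · rintro _ ⟨x, hfx, rfl⟩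
    exact combinedTester_oneSided Tst M Sim _ (hTstC _ ⟨x, rfl⟩)
      (probOut_true_eq_one_of_false_le (hSimC x false) (by simpa [hfx] using hDT1 x))
end
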